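/- arXiv:2301.01116 — 6 statements merged into one kernel-verified Lean document; each statement's English description precedes it below -/
import Mathlib

section
/- A periodic infinite sequence over positive integers is distinct from its run-length encoding (exponent trajectory); consequently, the Oldenburger-Kolakoski sequence is not eventually periodic. -/
/-!
If `w = Δ(w)` is eventually `P`-periodic, then from some point on the run boundaries of `w`
are invariant under translation by `P`, so each period of `w` is cut into a fixed number
`Q ≤ P` of runs, and the run lengths — that is, `Δ(w) = w` itself — are eventually
`Q`-periodic. If `Q < P` we descend to the smaller period; if `Q = P` every run is eventually
of length one, so `w` is eventually constant, which is absurd for a sequence whose consecutive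
runs carry distinct letters. The Oldenburger-Kolakoski sequence is such a fixed point of `Δ`:
the directed construction writes its `k`-th run, of letter `T k`, with the length given by its
own `k`-th letter.
-/

def dirStep (X : List ℕ) (k t : ℕ) : List ℕ :=
  let X' := X ++ [t]
  X' ++ List.replicate (X'.getD k 1 - 1) t

/-- The word directed by the finite directing word `T`: at step `i` (0-indexed),
append `t_i` followed by `X[i] - 1` further copies of `t_i`. -/
def dirWord (T : List ℕ) : List ℕ :=
  (T.foldl (fun p t => (dirStep p.1 p.2 t, p.2 + 1)) (([] : List ℕ), 0)).1

/-- The `n`-th letter (1-indexed) of the infinite sequence directed by `T`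
(whose meaningful indices are `1, 2, …`). -/
def dirSeq (T : ℕ → ℕ) (n : ℕ) : ℕ :=
  (dirWord (List.ofFn fun i : Fin n => T (i + 1))).getD (n - 1) 0
/-- `IsRunSeq w d` : `d` is the run-length encoding `Δ(w)` of the infinite
sequence `w` (both read at indices `1, 2, …`): there are run boundaries
`b 0 = 1 < b 1 < b 2 < …` such that `w` is constant on each `[b k, b (k+1))`,
consecutive runs carry distinct letters, and `d (k+1)` is the length of the
`(k+1)`-st run. -/
def IsRunSeq (w d : ℕ → ℕ) : Prop :=
  ∃ b : ℕ → ℕ, b 0 = 1 ∧ StrictMono b ∧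
    (∀ k i, b k ≤ i → i < b (k + 1) → w i = w (b k)) ∧
    (∀ k, w (b (k + 1)) ≠ w (b k)) ∧
    (∀ k, d (k + 1) = b (k + 1) - b k)
/-- The Oldenburger-Kolakoski sequence, built by the directed construction
from the alternating directing sequence 1,2,1,2,… -/
def kolakoski : ℕ → ℕ := dirSeq (fun n => if n % 2 = 1 then 1 else 2)

structure IsRunBoundaries (w b : ℕ → ℕ) : Prop where
  zero : b 0 = 1
  strictMono : StrictMono b
  const : ∀ k i, b k ≤ i → i < b (k + 1) → w i = w (b k)
  ne : ∀ k, w (b (k + 1)) ≠ w (b k)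

theorem isRunSeq_iff {w d : ℕ → ℕ} :
    IsRunSeq w d ↔ ∃ b, IsRunBoundaries w b ∧ ∀ k, d (k + 1) = b (k + 1) - b k := by
  constructor
  · rintro ⟨b, h0, hmono, hconst, hne, hd⟩
    exact ⟨b, ⟨h0, hmono, hconst, hne⟩, hd⟩
  · rintro ⟨b, ⟨h0, hmono, hconst, hne⟩, hd⟩
    exact ⟨b, h0, hmono, hconst, hne, hd⟩

theorem IsRunSeq.congr_right {w d d' : ℕ → ℕ} (h : IsRunSeq w d)
    (hdd' : ∀ n, 1 ≤ n → d n = d' n) : IsRunSeq w d' := by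
  obtain ⟨b, hb, hd⟩ := isRunSeq_iff.1 h
  exact isRunSeq_iff.2 ⟨b, hb, fun k => (hdd' (k + 1) k.succ_pos).symm.trans (hd k)⟩

theorem StrictMono.exists_shift_of_range_periodic {b : ℕ → ℕ} (hb : StrictMono b) {P M : ℕ}
    (hper : ∀ n ≥ M, n ∈ Set.range b ↔ n + P ∈ Set.range b) (hP : 0 < P) :
    ∃ Q k₀, 0 < Q ∧ ∀ k ≥ k₀, b (k + Q) = b k + P := by
  obtain ⟨j, hj⟩ := (hper (b M) (hb.id_le M)).1 ⟨M, rfl⟩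
  have hMj : M < j := hb.lt_iff_lt.1 (by omega)
  refine ⟨j - M, M, by omega, fun k hk => ?_⟩
  induction k, hk using Nat.le_induction with
  | base => rw [Nat.add_sub_cancel' hMj.le, hj]
  | succ k hk ih =>
    set Q := j - M
    have hMk : M ≤ b k := (hb.id_le M).trans (hb.monotone hk)
    have hk₁ : b k < b (k + 1) := hb k.lt_add_one
    have hkQ : b (k + Q) < b (k + Q + 1) := hb (k + Q).lt_add_one
    -- `b (k + 1) + P` and `b (k + Q + 1) - P` are boundaries, and none lies strictly between
    -- two consecutive ones
    have hup : b (k + Q + 1) ≤ b (k + 1) + P := by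
      obtain ⟨j₁, hj₁⟩ := (hper (b (k + 1)) (by omega)).1 ⟨k + 1, rfl⟩
      have : k + Q < j₁ := hb.lt_iff_lt.1 (by omega)
      exact hj₁ ▸ hb.monotone this
    have hlow : b (k + 1) + P ≤ b (k + Q + 1) := by
      obtain ⟨j₂, hj₂⟩ := (hper (b (k + Q + 1) - P) (by omega)).2
        ⟨k + Q + 1, by omega⟩
      have : k < j₂ := hb.lt_iff_lt.1 (by omega)
      have := hb.monotone (show k + 1 ≤ j₂ by omega)
      omega
    rw [Nat.add_right_comm]
    omega

namespace IsRunBoundaries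

variable {w b : ℕ → ℕ}

theorem exists_le_lt (hb : IsRunBoundaries w b) {n : ℕ} (hn : 1 ≤ n) :
    ∃ k, b k ≤ n ∧ n < b (k + 1) := by
  have hex : ∃ k, n < b (k + 1) := ⟨n, hb.strictMono.id_le (n + 1)⟩
  refine ⟨Nat.find hex, ?_, Nat.find_spec hex⟩
  rcases h : Nat.find hex with _ | k
  · rw [hb.zero]; exact hn
  · exact not_lt.1 (Nat.find_min hex (h ▸ k.lt_add_one))

theorem succ_mem_range_iff (hb : IsRunBoundaries w b) {n : ℕ} (hn : 1 ≤ n) :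
    n + 1 ∈ Set.range b ↔ w (n + 1) ≠ w n := by
  constructor
  · rintro ⟨_ | j, hj⟩
    · have := hb.zero; omega
    · have : b j < b (j + 1) := hb.strictMono j.lt_add_one
      rw [← hj, hb.const j n (by omega) (by omega)]
      exact hb.ne j
  · intro hw
    obtain ⟨k, hk, hnk⟩ := hb.exists_le_lt hn
    refine ⟨k + 1, ?_⟩
    by_contra h
    exact hw ((hb.const k (n + 1) (by omega) (by omega)).trans (hb.const k n hk hnk).symm)

theorem range_periodic (hb : IsRunBoundaries w b) {P N : ℕ}
    (hw : ∀ n ≥ N, w (n + P) = w n) :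
    ∀ n ≥ N + 2, n ∈ Set.range b ↔ n + P ∈ Set.range b := by
  intro n hn
  obtain ⟨n, rfl⟩ : ∃ m, n = m + 1 := ⟨n - 1, by omega⟩
  rw [hb.succ_mem_range_iff (by omega), Nat.add_right_comm, hb.succ_mem_range_iff (by omega),
    Nat.add_right_comm n P, hw (n + 1) (by omega), hw n (by omega)]

end IsRunBoundaries

theorem IsRunSeq.exists_eventually_periodic {w d : ℕ → ℕ} (h : IsRunSeq w d) {P N : ℕ}
    (hP : 0 < P) (hw : ∀ n ≥ N, w (n + P) = w n) :
    ∃ Q M, 0 < Q ∧ Q ≤ P ∧ (∀ n ≥ M, d (n + Q) = d n) ∧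
      (Q = P → ∀ n ≥ M, d n = 1) := by
  obtain ⟨b, hb, hd⟩ := isRunSeq_iff.1 h
  obtain ⟨Q, k₀, hQ, hshift⟩ :=
    hb.strictMono.exists_shift_of_range_periodic (hb.range_periodic hw) hP
  have hQP : Q ≤ P := by
    have := hb.strictMono.add_le_nat Q k₀
    rw [Nat.add_comm Q k₀, hshift k₀ le_rfl] at this
    omega
  refine ⟨Q, k₀ + 1, hQ, hQP, fun n hn => ?_, ?_⟩
  · obtain ⟨k, rfl⟩ : ∃ k, n = k + 1 := ⟨n - 1, by omega⟩
    have h₁ := hshift (k + 1) (by omega)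
    have h₀ := hshift k (by omega)
    rw [Nat.add_right_comm] at h₁
    rw [Nat.add_right_comm, hd, hd]
    omega
  · rintro rfl n hn
    obtain ⟨k, rfl⟩ : ∃ k, n = k + 1 := ⟨n - 1, by omega⟩
    have hrun := hb.strictMono.add_le_nat (Q - 1) (k + 1)
    rw [show Q - 1 + (k + 1) = k + Q by omega, hshift k (by omega)] at hrun
    have := hb.strictMono k.lt_add_one
    rw [hd]
    omega

theorem not_eventually_periodic_of_isRunSeq_self {w : ℕ → ℕ} (h : IsRunSeq w w) {P : ℕ}
    (hP : 0 < P) : ¬ ∃ N, ∀ n ≥ N, w (n + P) = w n := by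
  induction P using Nat.strong_induction_on with
  | _ P ih =>
  rintro ⟨N, hw⟩
  obtain ⟨Q, M, hQ, hQP, hper, hone⟩ := h.exists_eventually_periodic hP hw
  rcases hQP.lt_or_eq with hlt | rfl
  · exact ih Q hlt hQ ⟨M, hper⟩
  · obtain ⟨b, hb, -⟩ := isRunSeq_iff.1 h
    have hM : M ≤ b M := hb.strictMono.id_le M
    have hM₁ : b M < b (M + 1) := hb.strictMono M.lt_add_one
    exact hb.ne M ((hone rfl _ (by omega)).trans (hone rfl _ hM).symm)

theorem List.IsPrefix.getD_eq {α : Type*} {l₁ l₂ : List α} (h : l₁ <+: l₂) {i : ℕ}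
    (hi : i < l₁.length) (x : α) : l₂.getD i x = l₁.getD i x := by
  obtain ⟨l, rfl⟩ := h
  exact List.getD_append _ _ _ _ hi

theorem dirWord_append_singleton (L : List ℕ) (t : ℕ) :
    dirWord (L ++ [t]) = dirStep (dirWord L) L.length t := by
  have hcount : ∀ (L X : List ℕ) (m : ℕ),
      (L.foldl (fun p t => (dirStep p.1 p.2 t, p.2 + 1)) (X, m)).2 = m + L.length := by
    intro L
    induction L with
    | nil => simp
    | cons t L ih => intro X m; simp only [List.foldl_cons, ih, List.length_cons]; ring
  simp [dirWord, List.foldl_append, hcount]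

theorem dirStep_eq_append_replicate (X : List ℕ) (k t : ℕ) :
    dirStep X k t = X ++ List.replicate ((X ++ [t]).getD k 1 - 1 + 1) t := by
  simp [dirStep, List.replicate_succ]

section Directed

variable (T : ℕ → ℕ)

def dirPrefix (n : ℕ) : List ℕ := dirWord (List.ofFn fun i : Fin n => T (i + 1))

theorem dirPrefix_zero : dirPrefix T 0 = [] := rfl

theorem dirPrefix_succ (n : ℕ) :
    dirPrefix T (n + 1) = dirStep (dirPrefix T n) n (T (n + 1)) := by
  rw [dirPrefix, List.ofFn_succ', List.concat_eq_append, dirWord_append_singleton]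
  simp [dirPrefix]

theorem dirSeq_succ (n : ℕ) : dirSeq T (n + 1) = (dirPrefix T (n + 1)).getD n 0 := rfl

theorem dirPrefix_prefix_succ (n : ℕ) : dirPrefix T n <+: dirPrefix T (n + 1) := by
  rw [dirPrefix_succ, dirStep_eq_append_replicate]
  exact List.prefix_append _ _

theorem dirPrefix_prefix {m n : ℕ} (h : m ≤ n) : dirPrefix T m <+: dirPrefix T n := by
  induction n, h using Nat.le_induction with
  | base => exact List.prefix_refl _
  | succ n _ ih => exact ih.trans (dirPrefix_prefix_succ T n)

theorem le_length_dirPrefix (n : ℕ) : n ≤ (dirPrefix T n).length := by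
  induction n with
  | zero => simp
  | succ n ih =>
    rw [dirPrefix_succ, dirStep_eq_append_replicate, List.length_append, List.length_replicate]
    omega

theorem getD_dirPrefix {m i : ℕ} (h : i < (dirPrefix T m).length) :
    (dirPrefix T m).getD i 0 = dirSeq T (i + 1) := by
  have hi : i < (dirPrefix T (i + 1)).length := le_length_dirPrefix T (i + 1)
  rw [dirSeq_succ]
  rcases le_total m (i + 1) with hm | hm
  · exact ((dirPrefix_prefix T hm).getD_eq h 0).symm
  · exact (dirPrefix_prefix T hm).getD_eq hi 0

variable {T}

theorem pos_of_mem_dirPrefix (hT : ∀ n, 0 < T (n + 1)) {n x : ℕ} (hx : x ∈ dirPrefix T n) :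
    0 < x := by
  induction n with
  | zero => simp [dirPrefix_zero] at hx
  | succ n ih =>
    rw [dirPrefix_succ, dirStep_eq_append_replicate, List.mem_append, List.mem_replicate] at hx
    rcases hx with hx | ⟨-, rfl⟩
    · exact ih hx
    · exact hT n

theorem dirSeq_pos (hT : ∀ n, 0 < T (n + 1)) (n : ℕ) : 0 < dirSeq T (n + 1) := by
  rw [dirSeq_succ, List.getD_eq_getElem _ _ (le_length_dirPrefix T (n + 1))]
  exact pos_of_mem_dirPrefix hT (List.getElem_mem _)

theorem dirPrefix_succ_eq_append_replicate (hT : ∀ n, 0 < T (n + 1)) (k : ℕ) :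
    dirPrefix T (k + 1) = dirPrefix T k ++ List.replicate (dirSeq T (k + 1)) (T (k + 1)) := by
  set X := dirPrefix T k ++ [T (k + 1)]
  have hk : k < X.length := by
    simp only [X, List.length_append, List.length_singleton]
    have := le_length_dirPrefix T k
    omega
  have hX : X <+: dirPrefix T (k + 1) := by
    rw [dirPrefix_succ]
    exact List.prefix_append _ _
  have hcount : X.getD k 1 = dirSeq T (k + 1) := by
    rw [dirSeq_succ, hX.getD_eq hk, List.getD_eq_getElem _ _ hk, List.getD_eq_getElem _ _ hk]
  rw [dirPrefix_succ, dirStep_eq_append_replicate, hcount,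
    Nat.sub_add_cancel (dirSeq_pos hT k)]

theorem length_dirPrefix_succ (hT : ∀ n, 0 < T (n + 1)) (k : ℕ) :
    (dirPrefix T (k + 1)).length = (dirPrefix T k).length + dirSeq T (k + 1) := by
  rw [dirPrefix_succ_eq_append_replicate hT, List.length_append, List.length_replicate]

theorem dirSeq_eq_of_mem_run (hT : ∀ n, 0 < T (n + 1)) {k i : ℕ}
    (h₁ : (dirPrefix T k).length ≤ i) (h₂ : i < (dirPrefix T (k + 1)).length) :
    dirSeq T (i + 1) = T (k + 1) := by
  rw [← getD_dirPrefix T h₂, dirPrefix_succ_eq_append_replicate hT,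
    List.getD_append_right _ _ _ _ h₁, List.getD_replicate]
  rw [length_dirPrefix_succ hT] at h₂
  omega

theorem isRunSeq_dirSeq_self (hT : ∀ n, 0 < T (n + 1)) (halt : ∀ n, T (n + 2) ≠ T (n + 1)) :
    IsRunSeq (dirSeq T) (dirSeq T) := by
  have hlen := length_dirPrefix_succ hT
  have hpos := dirSeq_pos hT
  have hrun : ∀ k i, (dirPrefix T k).length + 1 ≤ i → i < (dirPrefix T (k + 1)).length + 1 →
      dirSeq T i = T (k + 1) := by
    intro k i h₁ h₂
    obtain ⟨i, rfl⟩ : ∃ j, i = j + 1 := ⟨i - 1, by omega⟩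
    exact dirSeq_eq_of_mem_run hT (by omega) (by omega)
  refine isRunSeq_iff.2 ⟨fun k => (dirPrefix T k).length + 1, ⟨rfl, ?_, ?_, ?_⟩, ?_⟩
  · refine strictMono_nat_of_lt_succ fun k => ?_
    have := hpos k
    simp only [hlen]
    omega
  · intro k i h₁ h₂
    have := hpos k
    rw [hrun k i h₁ h₂, hrun k _ le_rfl (by omega)]
  · intro k
    have := hlen k
    have := hlen (k + 1)
    have := hpos k
    have := hpos (k + 1)
    rw [hrun (k + 1) _ le_rfl (by omega), hrun k _ le_rfl (by omega)]
    exact halt k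
  · intro k
    simp only [hlen]
    omega

end Directed

theorem isRunSeq_kolakoski : IsRunSeq kolakoski kolakoski :=
  isRunSeq_dirSeq_self (fun n => by split_ifs <;> omega) (fun n => by split_ifs <;> omega)

/-- a periodic sequence over ℕ* is distinct from its run-length
encoding; consequently the Oldenburger-Kolakoski sequence is not eventually
periodic. -/
theorem stmt1 :
    (∀ w d : ℕ → ℕ, (∀ n, 1 ≤ n → 1 ≤ w n) →
      (∃ P, 1 ≤ P ∧ ∀ n, 1 ≤ n → w (n + P) = w n) →
      IsRunSeq w d → ∃ n, 1 ≤ n ∧ d n ≠ w n) ∧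
    ¬ ∃ P N : ℕ, 1 ≤ P ∧ ∀ n, N ≤ n → kolakoski (n + P) = kolakoski n := by
  constructor
  · rintro w d - ⟨P, hP, hw⟩ hd
    by_contra! hdw
    exact not_eventually_periodic_of_isRunSeq_self (hd.congr_right hdw) hP ⟨1, hw⟩
  · rintro ⟨P, N, hP, hw⟩
    exact not_eventually_periodic_of_isRunSeq_self isRunSeq_kolakoski hP ⟨N, hw⟩
end

section
/- For every pair (a,b) of positive integers with a ≠ b, there exists a unique infinite sequence over the alphabet {a,b} that starts with a and is a fixed point of the run-length encoding operator Δ. -/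
namespace Stmt2

/-- letter of the k-th run -/
def lett (a b k : ℕ) : ℕ := if Even k then a else b

/-- concatenation of first k runs -/
def L (a b : ℕ) : ℕ → List ℕ
  | 0 => []
  | k+1 => L a b k ++ List.replicate ((L a b k).getD k (lett a b k)) (lett a b k)

lemma lett_mem (a b k : ℕ) : lett a b k = a ∨ lett a b k = b := by
  unfold lett; split <;> simp

lemma lett_succ_ne (a b : ℕ) (hab : a ≠ b) (k : ℕ) : lett a b (k+1) ≠ lett a b k := by
  by_cases h : Even k <;> simp [lett, h, Nat.even_add_one, hab, hab.symm]

lemma mem_L (a b k : ℕ) : ∀ x ∈ L a b k, x = a ∨ x = b := by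
  induction k with
  | zero => simp [L]
  | succ k ih =>
    intro x hx
    simp only [L, List.mem_append, List.mem_replicate] at hx
    rcases hx with h | h
    · exact ih x h
    · rw [h.2]; exact lett_mem a b k

lemma lenpos (a b : ℕ) (ha : 0 < a) (hb : 0 < b) (k : ℕ) :
    0 < (L a b k).getD k (lett a b k) := by
  by_cases h : k < (L a b k).length
  · rw [List.getD_eq_getElem _ _ h]
    rcases mem_L a b k _ (List.getElem_mem h) with h' | h' <;> rw [h']
    · exact ha
    · exact hb
  · rw [List.getD_eq_default _ _ (le_of_not_gt h)]
    rcases lett_mem a b k with h' | h' <;> rw [h']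
    · exact ha
    · exact hb

lemma L_len (a b : ℕ) (ha : 0 < a) (hb : 0 < b) : ∀ k, k ≤ (L a b k).length := by
  intro k
  induction k with
  | zero => simp
  | succ k ih =>
    have := lenpos a b ha hb k
    simp only [L, List.length_append, List.length_replicate]
    omega

lemma L_prefix (a b : ℕ) : ∀ {k m}, k ≤ m → L a b k <+: L a b m := by
  intro k m h
  induction m with
  | zero => simp_all
  | succ m ih =>
    rcases Nat.lt_or_ge k (m+1) with h' | h'
    · exact (ih (by omega)).trans ⟨_, rfl⟩
    · have : k = m + 1 := by omega
      subst this; exact List.prefix_refl _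

lemma getD_stable (a b : ℕ) {k m i : ℕ} (hkm : k ≤ m) (hi : i < (L a b k).length) :
    (L a b m).getD i 0 = (L a b k).getD i 0 := by
  have hp := L_prefix a b hkm
  have hi' : i < (L a b m).length := lt_of_lt_of_le hi hp.length_le
  rw [List.getD_eq_getElem _ _ hi, List.getD_eq_getElem _ _ hi', hp.getElem hi]

/-- the sequence itself (1-indexed) -/
def W (a b n : ℕ) : ℕ := (L a b n).getD (n-1) 0

/-- run boundaries -/
def B (a b k : ℕ) : ℕ := (L a b k).length + 1

lemma W_eq (a b : ℕ) (ha : 0 < a) (hb : 0 < b) {k i : ℕ} (hi : i < (L a b k).length) :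
    W a b (i+1) = (L a b k).getD i 0 := by
  unfold W
  simp only [Nat.add_sub_cancel]
  have h1 : i < (L a b (i+1)).length := lt_of_lt_of_le (Nat.lt_succ_self i) (L_len a b ha hb (i+1))
  rcases le_total k (i+1) with h | h
  · rw [getD_stable a b h hi]
  · rw [getD_stable a b h h1]

lemma run_val (a b : ℕ) {k i : ℕ} (hk : (L a b k).length ≤ i)
    (hi : i < (L a b (k+1)).length) : (L a b (k+1)).getD i 0 = lett a b k := by
  show (L a b k ++ List.replicate _ _).getD i 0 = lett a b k
  rw [List.getD_append_right _ _ _ _ hk]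
  have hi' : i - (L a b k).length < (L a b k).getD k (lett a b k) := by
    simp only [L, List.length_append, List.length_replicate] at hi; omega
  rw [List.getD_eq_getElem _ _ (by simpa using hi'), List.getElem_replicate]

lemma B_succ (a b k : ℕ) : B a b (k+1) = B a b k + (L a b k).getD k (lett a b k) := by
  simp only [B, L, List.length_append, List.length_replicate]; omega

lemma B_lt (a b : ℕ) (ha : 0 < a) (hb : 0 < b) (k : ℕ) : B a b k < B a b (k+1) := by
  have := lenpos a b ha hb k
  rw [B_succ]; omega

/-- w i = lett k for B k ≤ i < B (k+1) -/
lemma W_run (a b : ℕ) (ha : 0 < a) (hb : 0 < b) {k i : ℕ}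
    (h1 : B a b k ≤ i) (h2 : i < B a b (k+1)) : W a b i = lett a b k := by
  have hi1 : 1 ≤ i := by
    have : 1 ≤ B a b k := by simp [B]
    omega
  obtain ⟨j, rfl⟩ : ∃ j, i = j + 1 := ⟨i - 1, by omega⟩
  have hj1 : (L a b k).length ≤ j := by simp [B] at h1; omega
  have hj2 : j < (L a b (k+1)).length := by simp [B] at h2; omega
  rw [W_eq a b ha hb hj2, run_val a b hj1 hj2]

lemma W_mem (a b : ℕ) (ha : 0 < a) (hb : 0 < b) {n : ℕ} (hn : 1 ≤ n) :
    W a b n = a ∨ W a b n = b := by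
  unfold W
  have h : n - 1 < (L a b n).length := lt_of_lt_of_le (by omega) (L_len a b ha hb n)
  rw [List.getD_eq_getElem _ _ h]
  exact mem_L a b n _ (List.getElem_mem h)

lemma W_len (a b : ℕ) (ha : 0 < a) (hb : 0 < b) (k : ℕ) :
    W a b (k+1) = (L a b k).getD k (lett a b k) := by
  rcases Nat.lt_or_ge k (L a b k).length with h | h
  · rw [W_eq a b ha hb h, List.getD_eq_getElem _ _ h, List.getD_eq_getElem _ _ h]
  · have hk : (L a b k).length = k := le_antisymm h (L_len a b ha hb k)
    rw [List.getD_eq_default _ _ h]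
    have h1 : B a b k ≤ k + 1 := by simp [B, hk]
    have h2 : k + 1 < B a b (k+1) := by
      have h3 := lenpos a b ha hb k
      have hB : B a b k = k + 1 := by simp [B, hk]
      rw [B_succ, hB]; omega
    exact W_run a b ha hb h1 h2

lemma W_one (a b : ℕ) (ha : 0 < a) (hb : 0 < b) : W a b 1 = a := by
  have h1 : B a b 0 ≤ 1 := by simp [B, L]
  have h2 : 1 < B a b 1 := B_lt a b ha hb 0
  rw [W_run a b ha hb h1 h2]; simp [lett]

lemma isRun (a b : ℕ) (ha : 0 < a) (hb : 0 < b) (hab : a ≠ b) :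
    IsRunSeq (W a b) (W a b) := by
  refine ⟨B a b, by simp [B, L], strictMono_nat_of_lt_succ (B_lt a b ha hb), ?_, ?_, ?_⟩
  · intro k i h1 h2
    rw [W_run a b ha hb h1 h2, W_run a b ha hb (le_refl _) (B_lt a b ha hb k)]
  · intro k
    rw [W_run a b ha hb (le_refl _) (B_lt a b ha hb (k+1)),
      W_run a b ha hb (le_refl _) (B_lt a b ha hb k)]
    exact lett_succ_ne a b hab k
  · intro k
    rw [W_len a b ha hb k, B_succ]; omega

lemma uniq (a b : ℕ) (ha : 0 < a) (hb : 0 < b) (hab : a ≠ b)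
    (y : ℕ → ℕ) (hy : (∀ n, 1 ≤ n → y n = a ∨ y n = b) ∧ y 1 = a ∧ IsRunSeq y y) :
    ∀ n, 1 ≤ n → y n = W a b n := by
  obtain ⟨hmem, h1, c, hc0, hcm, hconst, hne, hd⟩ := hy
  have hcs : ∀ k, c (k+1) = c k + y (k+1) := by
    intro k
    have h2 := hd k
    have h3 : c k < c (k+1) := hcm (by omega)
    omega
  have hB_ge : ∀ k, k + 1 ≤ B a b k := fun k => by
    have := L_len a b ha hb k; simp only [B]; omega
  have hB0 : B a b 0 = 1 := by simp [B, L]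
  have key : ∀ k, c k = B a b k ∧ y (c k) = W a b (B a b k) ∧
      ∀ i, 1 ≤ i → i ≤ B a b k → y i = W a b i := by
    intro k
    induction k with
    | zero =>
      refine ⟨by rw [hc0, hB0], ?_, ?_⟩
      · rw [hc0, hB0, h1, W_one a b ha hb]
      · intro i hi1 hi2
        rw [hB0] at hi2
        have : i = 1 := by omega
        subst this; rw [h1, W_one a b ha hb]
    | succ k ih =>
      obtain ⟨e1, e2, e3⟩ := ih
      have hyk : y (k+1) = W a b (k+1) := e3 (k+1) (by omega) (hB_ge k)
      have ew : B a b (k+1) = B a b k + W a b (k+1) := by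
        rw [B_succ, W_len a b ha hb]
      have e1' : c (k+1) = B a b (k+1) := by rw [hcs, e1, hyk, ew]
      have lt1 : B a b k < B a b (k+1) := B_lt a b ha hb k
      have e2' : y (c (k+1)) = W a b (B a b (k+1)) := by
        have hy' : y (c (k+1)) ≠ y (c k) := hne k
        have hw' : W a b (B a b (k+1)) ≠ W a b (B a b k) := by
          rw [W_run a b ha hb (le_refl _) (B_lt a b ha hb (k+1)),
            W_run a b ha hb (le_refl _) lt1]
          exact lett_succ_ne a b hab k
        have m1 : y (c (k+1)) = a ∨ y (c (k+1)) = b :=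
          hmem _ (by rw [e1']; have := hB_ge (k+1); omega)
        have m2 := W_mem a b ha hb (show 1 ≤ B a b (k+1) by have := hB_ge (k+1); omega)
        have m3 := W_mem a b ha hb (show 1 ≤ B a b k by have := hB_ge k; omega)
        rw [e2] at hy'
        omega
      refine ⟨e1', e2', ?_⟩
      intro i hi1 hi2
      rcases Nat.lt_or_ge i (B a b (k+1)) with h | h
      · rcases le_or_gt i (B a b k) with h' | h'
        · exact e3 i hi1 h'
        · have hy2 : y i = y (c k) := hconst k i (by omega) (by rw [e1']; exact h)
          have hw2 : W a b i = W a b (B a b k) := by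
            rw [W_run a b ha hb (le_of_lt h') h, W_run a b ha hb (le_refl _) lt1]
          rw [hy2, hw2, e2]
      · have : i = B a b (k+1) := by omega
        subst this
        rw [e1'] at e2'; exact e2'
  intro n hn
  obtain ⟨e1, e2, e3⟩ := key n
  exact e3 n hn (by have := hB_ge n; omega)

end Stmt2

/-- for any pair of distinct positive integers (a,b) there is a
unique sequence over the alphabet {a,b} starting with a that is a fixed point
of the run-length encoding operator Δ. -/
theorem stmt2 (a b : ℕ) (ha : 0 < a) (hb : 0 < b) (hab : a ≠ b) :
    ∃ x : ℕ → ℕ,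
      ((∀ n, 1 ≤ n → x n = a ∨ x n = b) ∧ x 1 = a ∧ IsRunSeq x x) ∧
      ∀ y : ℕ → ℕ,
        ((∀ n, 1 ≤ n → y n = a ∨ y n = b) ∧ y 1 = a ∧ IsRunSeq y y) →
        ∀ n, 1 ≤ n → y n = x n := by
  exact ⟨Stmt2.W a b,
    ⟨fun n hn => Stmt2.W_mem a b ha hb hn, Stmt2.W_one a b ha hb,
      Stmt2.isRun a b ha hb hab⟩,
    fun y hy => Stmt2.uniq a b ha hb hab y hy⟩
end

section
/- For each n ≥ 2, the set S_{n,n} consists exactly of the two words (1,1,…,1,1) and (1,1,…,1,2) (all 1's in the first n−1 positions, arbitrary last letter). -/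
/-- `Snk n k` : the set of directing words `(t_1,…,t_n) ∈ {1,2}^n` such that the
minimal `j ∈ [1,n]` with `Σ_i [O_{t_1…t_j}]_i ≥ n` equals `k`. -/
def Snk (n k : ℕ) : Set (List ℕ) :=
  {T | T.length = n ∧ (∀ t ∈ T, t = 1 ∨ t = 2) ∧
    IsLeast {j | 1 ≤ j ∧ j ≤ n ∧ n ≤ (dirWord (T.take j)).sum} k}


abbrev F : List ℕ × ℕ → ℕ → List ℕ × ℕ := fun p t => (dirStep p.1 p.2 t, p.2 + 1)

lemma dirStep_ones (k : ℕ) :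
    dirStep (List.replicate k 1) k 1 = List.replicate (k+1) 1 := by
  simp [dirStep, ← List.replicate_succ' (n := k)]

lemma foldl_ones (j : ℕ) : ∀ k, List.foldl F (List.replicate k 1, k) (List.replicate j 1)
    = (List.replicate (k+j) 1, k+j) := by
  induction j with
  | zero => simp
  | succ j ih =>
    intro k
    rw [List.replicate_succ, List.foldl_cons]
    show List.foldl F (dirStep (List.replicate k 1) k 1, k+1) _ = _
    rw [dirStep_ones, ih (k+1)]
    ring_nf

lemma dirStep_sum (w : List ℕ) (k t : ℕ) (ht : 1 ≤ t) :
    w.sum + 1 ≤ (dirStep w k t).sum := by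
  simp [dirStep]
  omega

lemma foldl_sum (T : List ℕ) (hT : ∀ t ∈ T, 1 ≤ t) : ∀ w k,
    w.sum + T.length ≤ (List.foldl F (w, k) T).1.sum := by
  induction T with
  | nil => simp
  | cons t rest ih =>
    intro w k
    have h1 := dirStep_sum w k t (hT t (by simp))
    have h2 := ih (fun x hx => hT x (by simp [hx])) (dirStep w k t) (k+1)
    simp only [List.foldl_cons, List.length_cons]
    show w.sum + (rest.length + 1) ≤ (List.foldl F (dirStep w k t, k+1) rest).1.sum
    omega

lemma dirStep_two (k : ℕ) :
    dirStep (List.replicate k 1) k 2 = List.replicate k 1 ++ [2, 2] := by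
  simp [dirStep]

lemma contains_two (T : List ℕ) (hT : ∀ t ∈ T, t = 1 ∨ t = 2) (h2 : 2 ∈ T) : ∀ k,
    (List.replicate k 1).sum + T.length + 3 ≤ (List.foldl F (List.replicate k 1, k) T).1.sum := by
  induction T with
  | nil => simp at h2
  | cons t rest ih =>
    intro k
    rcases hT t (by simp) with ht | ht
    · subst ht
      have h2' : 2 ∈ rest := by simpa using h2
      have := ih (fun x hx => hT x (by simp [hx])) h2' (k+1)
      simp only [List.foldl_cons]
      show _ ≤ (List.foldl F (dirStep (List.replicate k 1) k 1, k+1) rest).1.sum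
      rw [dirStep_ones]
      simp at this ⊢
      omega
    · subst ht
      simp only [List.foldl_cons]
      show _ ≤ (List.foldl F (dirStep (List.replicate k 1) k 2, k+1) rest).1.sum
      rw [dirStep_two]
      have := foldl_sum rest (fun x hx => by rcases hT x (by simp [hx]) with h|h <;> omega)
        (List.replicate k 1 ++ [2,2]) (k+1)
      simp at this ⊢
      omega

lemma dirWord_ones (j : ℕ) : dirWord (List.replicate j 1) = List.replicate j 1 := by
  have := foldl_ones j 0
  simpa [dirWord] using congrArg Prod.fst this

lemma dirWord_ones_two (k : ℕ) :
    dirWord (List.replicate k 1 ++ [2]) = List.replicate k 1 ++ [2, 2] := by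
  unfold dirWord
  rw [List.foldl_append]
  have h := foldl_ones k 0
  show (List.foldl F _ _).1 = _
  rw [show (List.foldl F (([]:List ℕ), 0) (List.replicate k 1)) = (List.replicate k 1, k) by
    simpa using h]
  simp [F, dirStep_two]

/-- for n ≥ 2, S_{n,n} = {(1,…,1), (1,…,1,2)}. -/
theorem stmt5 (n : ℕ) (hn : 2 ≤ n) :
    Snk n n = {List.replicate n 1, List.replicate (n - 1) 1 ++ [2]} := by
  ext T
  constructor
  · rintro ⟨hlen, hlet, ⟨hn1, hn2, hn3⟩, hlb⟩
    have hones : ∀ x ∈ T.take (n-1), x = 1 := by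
      by_contra hcon
      push_neg at hcon
      obtain ⟨x, hx, hx1⟩ := hcon
      have hx2 : x = 2 := by
        rcases hlet x (List.mem_of_mem_take hx) with h | h
        · exact absurd h hx1
        · exact h
      subst hx2
      have hlen' : (T.take (n-1)).length = n - 1 := by
        rw [List.length_take, hlen]; omega
      have := contains_two (T.take (n-1))
        (fun t ht => hlet t (List.mem_of_mem_take ht)) hx 0
      simp only [List.replicate_zero, List.sum_nil, zero_add, hlen'] at this
      have hmem : n - 1 ∈ {j | 1 ≤ j ∧ j ≤ n ∧ n ≤ (dirWord (T.take j)).sum} := by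
        refine ⟨by omega, by omega, ?_⟩
        calc n ≤ n - 1 + 3 := by omega
        _ ≤ _ := this
      have := hlb hmem
      omega
    have htake : T.take (n-1) = List.replicate (n-1) 1 := by
      apply List.eq_replicate_of_mem hones |>.trans
      rw [List.length_take, hlen]; congr 1; omega
    have hdrop : ∃ t, T.drop (n-1) = [t] ∧ (t = 1 ∨ t = 2) := by
      have hdl : (T.drop (n-1)).length = 1 := by rw [List.length_drop, hlen]; omega
      match hd : T.drop (n-1) with
      | [t] => exact ⟨t, rfl, hlet t (by rw [← List.take_append_drop (n-1) T]; simp [hd])⟩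
      | [] => simp [hd] at hdl
      | a :: b :: l => simp [hd] at hdl
    obtain ⟨t, hd, ht⟩ := hdrop
    have hT : T = List.replicate (n-1) 1 ++ [t] := by
      rw [← List.take_append_drop (n-1) T, htake, hd]
    rcases ht with rfl | rfl
    · left
      rw [hT, ← List.replicate_succ' (n := n-1)]
      congr 1; omega
    · right; exact hT
  · have hsum1 : ∀ j : ℕ, (dirWord (List.replicate j 1)).sum = j := by
      intro j; rw [dirWord_ones]; simp
    rintro (rfl | rfl)
    · refine ⟨by simp, fun t ht => Or.inl (List.eq_of_mem_replicate ht), ⟨⟨by omega, le_refl n, ?_⟩, ?_⟩⟩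
      · rw [List.take_replicate]
        rw [hsum1]; omega
      · rintro j ⟨hj1, hjn, hjs⟩
        rw [List.take_replicate, hsum1] at hjs
        omega
    · have hlen : (List.replicate (n-1) 1 ++ [2]).length = n := by simp; omega
      refine ⟨hlen, fun t ht => ?_, ⟨⟨by omega, le_refl n, ?_⟩, ?_⟩⟩
      · rcases List.mem_append.mp ht with h | h
        · exact Or.inl (List.eq_of_mem_replicate h)
        · exact Or.inr (by simpa using h)
      · rw [List.take_of_length_le (le_of_eq hlen), dirWord_ones_two]
        simp; omega
      · rintro j ⟨hj1, hjn, hjs⟩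
        by_contra hcon
        push_neg at hcon
        have hjle : j ≤ n - 1 := by omega
        rw [List.take_append_of_le_length (by simpa using hjle), List.take_replicate,
          min_eq_left hjle, hsum1] at hjs
        omega
end

section
/- Let T = (T_n) be i.i.d. random variables with P(T_n = 1) = p and P(T_n = 2) = 1 − p, p ∈ (0,1), and let X = O_T be the directed random sequence. Then for all n ≥ 2, P(X_n = 1) = p(1 − p^{n−2} + p^{n−1}). -/
theorem dirWord_foldl_snd (l X : List ℕ) (k : ℕ) :
    (l.foldl (fun p t => (dirStep p.1 p.2 t, p.2 + 1)) (X, k)).2 = k + l.length := by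
  induction l generalizing X k with
  | nil => simp
  | cons a l ih => simp only [List.foldl_cons, ih, List.length_cons]; omega

theorem dirWord_append_singleton_eq_dirStep (w : List ℕ) (t : ℕ) :
    dirWord (w ++ [t]) = dirStep (dirWord w) w.length t := by
  have h := dirWord_foldl_snd w [] 0
  simp only [zero_add] at h
  simp only [dirWord, List.foldl_append, List.foldl_cons, List.foldl_nil, h]

theorem length_le_length_dirWord (w : List ℕ) : w.length ≤ (dirWord w).length := by
  induction w using List.reverseRecOn with
  | nil => simp
  | append_singleton w t ih =>
    rw [dirWord_append_singleton_eq_dirStep]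
    simp only [dirStep, List.length_append, List.length_singleton, List.length_replicate]
    omega

theorem mem_of_mem_dirWord {w : List ℕ} {x : ℕ} (hx : x ∈ dirWord w) : x ∈ w := by
  induction w using List.reverseRecOn with
  | nil => simp [dirWord] at hx
  | append_singleton w t ih =>
    rw [dirWord_append_singleton_eq_dirStep] at hx
    simp only [dirStep, List.mem_append, List.mem_singleton, List.mem_replicate] at hx
    rcases hx with (hx | rfl) | ⟨-, rfl⟩
    · exact List.mem_append_left _ (ih hx)
    all_goals simp

theorem getD_dirWord_length_pos {w : List ℕ} {t : ℕ} (hw : ∀ x ∈ w, 0 < x) (ht : 0 < t) :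
    0 < (dirWord w).getD w.length t := by
  rcases (length_le_length_dirWord w).lt_or_eq with h | h
  · rw [List.getD_eq_getElem _ _ h]
    exact hw _ (mem_of_mem_dirWord (List.getElem_mem h))
  · rwa [List.getD_eq_default _ _ h.ge]

/-- The block appended for the letter `t` at step `|w|` has length `X[|w|]`, where `X` is the
word built so far, or `t` itself when `X` has not yet reached position `|w|`. -/
theorem dirWord_append_singleton_s8 {w : List ℕ} {t : ℕ} (hw : ∀ x ∈ w, 0 < x) (ht : 0 < t) :
    dirWord (w ++ [t]) = dirWord w ++ List.replicate ((dirWord w).getD w.length t) t := by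
  have hlen : (dirWord w ++ [t]).getD w.length 1 = (dirWord w).getD w.length t := by
    rcases (length_le_length_dirWord w).lt_or_eq with h | h
    · rw [List.getD_append _ _ _ _ h, List.getD_eq_getElem _ _ h, List.getD_eq_getElem _ _ h]
    · rw [List.getD_append_right _ _ _ _ h.ge, List.getD_eq_default _ _ h.ge, h]
      simp
  rw [dirWord_append_singleton_eq_dirStep, dirStep, hlen]
  obtain ⟨c, hc⟩ := Nat.exists_eq_add_of_lt (getD_dirWord_length_pos hw ht)
  rw [hc, List.replicate_succ]
  simp

theorem length_dirWord_append_singleton {w : List ℕ} {t : ℕ} (hw : ∀ x ∈ w, 0 < x)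
    (ht : 0 < t) :
    (dirWord (w ++ [t])).length = (dirWord w).length + (dirWord w).getD w.length t := by
  simp [dirWord_append_singleton_s8 hw ht]

theorem List.IsPrefix.dirWord {l₁ l₂ : List ℕ} (h : l₁ <+: l₂) : dirWord l₁ <+: dirWord l₂ := by
  obtain ⟨u, rfl⟩ := h
  induction u using List.reverseRecOn with
  | nil => simp
  | append_singleton u t ih =>
    rw [← List.append_assoc, dirWord_append_singleton_eq_dirStep, dirStep]
    exact ih.trans ⟨_, (List.append_assoc _ _ _).symm⟩

theorem dirWord_replicate_one (m : ℕ) : dirWord (List.replicate m 1) = List.replicate m 1 := by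
  induction m with
  | zero => rfl
  | succ m ih =>
    rw [List.replicate_succ', dirWord_append_singleton_s8 (by simp) one_pos, ih,
      List.getD_eq_default _ _ (by simp)]
    simp

theorem dirWord_replicate_one_append_two (m : ℕ) :
    dirWord (List.replicate m 1 ++ [2]) = List.replicate m 1 ++ [2, 2] := by
  rw [dirWord_append_singleton_s8 (by simp) two_pos, dirWord_replicate_one,
    List.getD_eq_default _ _ (by simp)]
  rfl

theorem eq_replicate_one_of_length_dirWord_le {w : List ℕ} (hw : ∀ x ∈ w, 0 < x)
    (h : (dirWord w).length ≤ w.length) : w = List.replicate w.length 1 := by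
  induction w using List.reverseRecOn with
  | nil => rfl
  | append_singleton w t ih =>
    have hw' : ∀ x ∈ w, 0 < x := fun x hx => hw x (List.mem_append_left _ hx)
    have ht : 0 < t := hw t (by simp)
    rw [length_dirWord_append_singleton hw' ht, List.length_append, List.length_singleton] at h
    have hge := length_le_length_dirWord w
    have hblock := getD_dirWord_length_pos hw' ht
    have hlen : (dirWord w).length = w.length := by omega
    rw [List.getD_eq_default _ _ hlen.le] at h
    obtain rfl : t = 1 := by omega
    rw [List.length_append, List.length_singleton, List.replicate_succ', ← ih hw' hlen.le]

theorem length_dirWord_take_mono (w : List ℕ) {j k : ℕ} (h : j ≤ k) :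
    (dirWord (w.take j)).length ≤ (dirWord (w.take k)).length :=
  (List.take_prefix_take_left h).dirWord.length_le

/-- The (0-based) index of the block of `dirWord w` containing the (0-based) position `m`. -/
noncomputable def blockIdx (w : List ℕ) (m : ℕ) : ℕ :=
  sInf {k | m < (dirWord (w.take (k + 1))).length}

theorem length_dirWord_take_blockIdx_le (w : List ℕ) (m : ℕ) :
    (dirWord (w.take (blockIdx w m))).length ≤ m := by
  obtain h | ⟨j, hj⟩ : blockIdx w m = 0 ∨ ∃ j, blockIdx w m = j + 1 := by
    cases blockIdx w m <;> simp
  · simp [h, dirWord]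
  · rw [hj]
    exact not_lt.1 (Nat.notMem_of_lt_sInf (s := {k | m < (dirWord (w.take (k + 1))).length})
      (by rw [blockIdx] at hj; omega))

theorem lt_length_dirWord_take_blockIdx_add_one {w : List ℕ} {m : ℕ} (hm : m < w.length) :
    m < (dirWord (w.take (blockIdx w m + 1))).length := by
  refine Nat.sInf_mem (s := {k | m < (dirWord (w.take (k + 1))).length}) ⟨w.length, ?_⟩
  rw [Set.mem_ofPred_eq, List.take_of_length_le (by omega)]
  exact hm.trans_le (length_le_length_dirWord w)

theorem blockIdx_lt_length {w : List ℕ} {m : ℕ} (hm : m < w.length) : blockIdx w m < w.length := by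
  have : blockIdx w m ≤ w.length - 1 := by
    refine Nat.sInf_le ?_
    rw [Set.mem_ofPred_eq, Nat.sub_add_cancel (by omega), List.take_length]
    exact hm.trans_le (length_le_length_dirWord w)
  omega

theorem blockIdx_eq_of_le_of_lt {w : List ℕ} {m k : ℕ} (h₁ : (dirWord (w.take k)).length ≤ m)
    (h₂ : m < (dirWord (w.take (k + 1))).length) : blockIdx w m = k := by
  refine le_antisymm (Nat.sInf_le h₂) (not_lt.1 fun hlt => ?_)
  have hmem : m < (dirWord (w.take (blockIdx w m + 1))).length :=
    Nat.sInf_mem (s := {k | m < (dirWord (w.take (k + 1))).length}) ⟨k, h₂⟩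
  have := length_dirWord_take_mono w (show blockIdx w m + 1 ≤ k by omega)
  omega

theorem getD_dirWord_eq_getD_blockIdx {w : List ℕ} {m : ℕ} (hw : ∀ x ∈ w, 0 < x)
    (hm : m < w.length) : (dirWord w).getD m 0 = w.getD (blockIdx w m) 0 := by
  set k := blockIdx w m
  have hk : k < w.length := blockIdx_lt_length hm
  have h₁ : (dirWord (w.take k)).length ≤ m := length_dirWord_take_blockIdx_le w m
  have h₂ : m < (dirWord (w.take (k + 1))).length := lt_length_dirWord_take_blockIdx_add_one hm
  have hpre : dirWord (w.take (k + 1)) <+: dirWord w := (List.take_prefix _ _).dirWord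
  rw [List.getD_eq_getElem _ _ (h₂.trans_le hpre.length_le), ← hpre.getElem h₂,
    List.getD_eq_getElem _ _ hk]
  simp only [← List.take_concat_get' _ _ hk, dirWord_append_singleton_s8
    (fun x hx => hw x (List.mem_of_mem_take hx)) (hw _ (List.getElem_mem hk))] at h₂ ⊢
  rw [List.getElem_append_right h₁, List.getElem_replicate]

theorem blockIdx_set {w : List ℕ} {m t : ℕ} (hw : ∀ x ∈ w, 0 < x) (hm : m < w.length)
    (ht : 0 < t)
    (hreg : ¬ (w.take (blockIdx w m) = List.replicate (blockIdx w m) 1 ∧ blockIdx w m < m)) :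
    blockIdx (w.set (blockIdx w m) t) m = blockIdx w m := by
  set k := blockIdx w m
  have hk : k < w.length := blockIdx_lt_length hm
  have htake : (w.set k t).take k = w.take k := List.take_set_of_le le_rfl
  have hw' : ∀ x ∈ w.take k, 0 < x := fun x hx => hw x (List.mem_of_mem_take hx)
  have hlen : (w.take k).length = k := by simp; omega
  have h₁ : (dirWord (w.take k)).length ≤ m := length_dirWord_take_blockIdx_le w m
  have h₂ : m < (dirWord (w.take (k + 1))).length := lt_length_dirWord_take_blockIdx_add_one hm
  rw [← List.take_concat_get' _ _ hk,
    length_dirWord_append_singleton hw' (hw _ (List.getElem_mem hk)), hlen] at h₂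
  apply blockIdx_eq_of_le_of_lt (htake ▸ h₁)
  rw [← List.take_concat_get' _ _ (by simpa using hk), htake, List.getElem_set_self,
    length_dirWord_append_singleton hw' ht, hlen]
  rcases lt_or_ge k (dirWord (w.take k)).length with hlt | hle
  · rwa [List.getD_eq_getElem _ _ hlt] at h₂ ⊢
  · -- the block starts at its own index `k`, so its length is the letter `t` itself
    have hones := eq_replicate_one_of_length_dirWord_le hw' (by rwa [hlen])
    have hkD := length_le_length_dirWord (w.take k)
    have htpos := getD_dirWord_length_pos hw' ht
    rw [hlen] at hones hkD htpos
    have : ¬ k < m := fun h => hreg ⟨hones, h⟩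
    omega

theorem take_eq_replicate_one_of_take_add_one_eq {w : List ℕ} {m : ℕ}
    (h : w.take (m + 1) = List.replicate m 1 ++ [2]) : w.take m = List.replicate m 1 := by
  have := congrArg (List.take m) h
  simpa [List.take_take] using this

theorem blockIdx_eq_of_take_eq {w : List ℕ} {m : ℕ}
    (h : w.take (m + 1) = List.replicate m 1 ++ [2]) : blockIdx w (m + 1) = m := by
  apply blockIdx_eq_of_le_of_lt
  · simp [take_eq_replicate_one_of_take_add_one_eq h, dirWord_replicate_one]
  · simp [h, dirWord_replicate_one_append_two]

theorem take_blockIdx_eq_replicate_and_lt_iff {w : List ℕ} {m : ℕ}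
    (hw : ∀ x ∈ w, x = 1 ∨ x = 2) (hm : m + 1 < w.length) :
    (w.take (blockIdx w (m + 1)) = List.replicate (blockIdx w (m + 1)) 1 ∧
        blockIdx w (m + 1) < m + 1) ↔
      w.take (m + 1) = List.replicate m 1 ++ [2] := by
  refine ⟨fun ⟨hones, hlt⟩ => ?_, fun h => ?_⟩
  · set k := blockIdx w (m + 1)
    have hk : k < w.length := blockIdx_lt_length hm
    have hwk := hw _ (List.getElem_mem hk)
    have h₂ := lt_length_dirWord_take_blockIdx_add_one hm
    rw [← List.take_concat_get' _ _ hk, hones, dirWord_append_singleton_s8 (by simp) (by omega),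
      dirWord_replicate_one, List.getD_eq_default _ _ (by simp)] at h₂
    simp only [List.length_append, List.length_replicate] at h₂
    have hkm : k = m := by omega
    have h2 : w[k] = 2 := by omega
    rw [← hkm, ← List.take_concat_get' _ _ hk, hones, h2]
  · rw [blockIdx_eq_of_take_eq h]
    exact ⟨take_eq_replicate_one_of_take_add_one_eq h, lt_add_one m⟩

def codeWord {N : ℕ} (v : Fin N → Bool) : List ℕ := List.ofFn fun i => cond (v i) 1 2

def cubeWeight {N : ℕ} (p : ℝ) (v : Fin N → Bool) : ℝ := ∏ i, cond (v i) p (1 - p)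

section Cube

variable {N : ℕ}

@[simp]
theorem length_codeWord (v : Fin N → Bool) : (codeWord v).length = N := by
  simp [codeWord]

theorem codeWord_injective : Function.Injective (codeWord (N := N)) := by
  intro u v h
  funext i
  have := congrFun (List.ofFn_inj.1 h) i
  cases hu : u i <;> cases hv : v i <;> simp_all

theorem eq_one_or_eq_two_of_mem_codeWord {v : Fin N → Bool} {x : ℕ} (hx : x ∈ codeWord v) :
    x = 1 ∨ x = 2 := by
  obtain ⟨i, rfl⟩ := List.mem_ofFn.1 hx
  cases v i <;> simp

theorem pos_of_mem_codeWord {v : Fin N → Bool} {x : ℕ} (hx : x ∈ codeWord v) : 0 < x := by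
  rcases eq_one_or_eq_two_of_mem_codeWord hx with rfl | rfl <;> norm_num

theorem getElem_codeWord (v : Fin N → Bool) (i : Fin N) :
    (codeWord v)[(i : ℕ)]'(by simp) = cond (v i) 1 2 := by
  simp [codeWord]

theorem codeWord_update (v : Fin N → Bool) (i : Fin N) (b : Bool) :
    codeWord (Function.update v i b) = (codeWord v).set i (cond b 1 2) := by
  refine List.ext_getElem (by simp) fun j h₁ h₂ => ?_
  rw [List.getElem_set]
  simp only [codeWord, List.getElem_ofFn]
  split_ifs with hij
  · subst hij; simp
  · rw [Function.update_of_ne (fun h => hij (congrArg Fin.val h).symm)]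

theorem codeWord_snoc (u : Fin N → Bool) (b : Bool) :
    codeWord (Fin.snoc u b : Fin (N + 1) → Bool) = codeWord u ++ [cond b 1 2] := by
  rw [codeWord, codeWord, List.ofFn_succ']
  simp

theorem codeWord_const_true : codeWord (fun _ : Fin N => true) = List.replicate N 1 := by
  simp [codeWord]

theorem take_codeWord_eq_codeWord_init (v : Fin (N + 1) → Bool) :
    (codeWord v).take N = codeWord (Fin.init v) := by
  rw [← Fin.snoc_init_self v, codeWord_snoc, Fin.init_snoc, List.take_left' (by simp)]

theorem cubeWeight_snoc (p : ℝ) (u : Fin N → Bool) (b : Bool) :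
    cubeWeight p (Fin.snoc u b : Fin (N + 1) → Bool) = cubeWeight p u * cond b p (1 - p) := by
  simp [cubeWeight, Fin.prod_univ_castSucc]

theorem cubeWeight_nonneg {p : ℝ} (hp : p ∈ Set.Icc (0 : ℝ) 1) (v : Fin N → Bool) :
    0 ≤ cubeWeight p v :=
  Finset.prod_nonneg fun i _ => by cases v i <;> simp [hp.1, hp.2]

theorem sum_cubeWeight (p : ℝ) : ∑ v : Fin N → Bool, cubeWeight p v = 1 := by
  simp only [cubeWeight]
  rw [← Fintype.prod_sum (fun _ b => cond b p (1 - p))]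
  simp

theorem sum_cubeWeight_filter_init_eq (p : ℝ) (u : Fin N → Bool) :
    ∑ v : Fin (N + 1) → Bool with Fin.init v = u, cubeWeight p v = cubeWeight p u := by
  have h : ({v : Fin (N + 1) → Bool | Fin.init v = u} : Finset _) =
      Finset.univ.map ⟨Fin.snoc u, fun _ _ h => (Fin.snoc_injective2 h).2⟩ := by
    ext v
    simp only [Finset.mem_filter, Finset.mem_univ, true_and, Finset.mem_map]
    refine ⟨fun h => ⟨v (Fin.last N), h ▸ Fin.snoc_init_self v⟩, ?_⟩
    rintro ⟨b, rfl⟩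
    exact Fin.init_snoc _ _
  rw [h, Finset.sum_map, Fintype.sum_bool]
  change cubeWeight p (Fin.snoc u true : Fin (N + 1) → Bool) +
    cubeWeight p (Fin.snoc u false : Fin (N + 1) → Bool) = _
  simp only [cubeWeight_snoc, Bool.cond_true, Bool.cond_false]
  ring

theorem cubeWeight_update_mul (p : ℝ) (v : Fin N → Bool) (i : Fin N) (b : Bool) :
    cubeWeight p (Function.update v i b) * cond (v i) p (1 - p) =
      cubeWeight p v * cond b p (1 - p) := by
  simp only [cubeWeight, Function.apply_update (fun _ x => cond x p (1 - p)),
    Finset.prod_update_of_mem (Finset.mem_univ i)]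
  rw [← Finset.mul_prod_erase _ _ (Finset.mem_univ i), Finset.sdiff_singleton_eq_erase]
  ring

/-- Flipping the coordinate `f v` is a weight-scaling bijection between the points of `S` where
it is `true` and those where it is `false`, so the former carry the fraction `p` of the mass. -/
theorem sum_cubeWeight_filter_apply_eq_true (p : ℝ) (S : Finset (Fin N → Bool))
    (f : (Fin N → Bool) → Fin N) (hS : ∀ v ∈ S, ∀ b, Function.update v (f v) b ∈ S)
    (hf : ∀ v ∈ S, ∀ b, f (Function.update v (f v) b) = f v) :
    ∑ v ∈ S with v (f v) = true, cubeWeight p v = p * ∑ v ∈ S, cubeWeight p v := by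
  have hflip : (1 - p) * ∑ v ∈ S with v (f v) = true, cubeWeight p v =
      p * ∑ v ∈ S with ¬ v (f v) = true, cubeWeight p v := by
    rw [Finset.mul_sum, Finset.mul_sum]
    refine Finset.sum_nbij' (fun v => Function.update v (f v) false)
      (fun v => Function.update v (f v) true) ?_ ?_ ?_ ?_ ?_
    all_goals
      intro v hv
      simp only [Finset.mem_filter] at hv
    · simpa [hf v hv.1] using hS v hv.1 false
    · simpa [hf v hv.1] using hS v hv.1 true
    · rw [hf v hv.1, Function.update_idem, ← hv.2, Function.update_eq_self]
    · rw [hf v hv.1, Function.update_idem, ← Bool.eq_false_iff.2 hv.2, Function.update_eq_self]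
    · have := cubeWeight_update_mul p v (f v) false
      rw [hv.2] at this
      simp only [Bool.cond_true, Bool.cond_false] at this
      linarith
  rw [← Finset.sum_filter_add_sum_filter_not S (fun v => v (f v) = true)]
  linear_combination hflip

end Cube

section BlockOf

variable {n : ℕ}

/-- The coordinate whose letter fills the (0-based) position `n + 1`, i.e. `X_{n+2}`. -/
noncomputable def blockOf (v : Fin (n + 2) → Bool) : Fin (n + 2) :=
  ⟨blockIdx (codeWord v) (n + 1),
    by simpa using blockIdx_lt_length (w := codeWord v) (m := n + 1) (by simp)⟩

@[simp]
theorem coe_blockOf (v : Fin (n + 2) → Bool) : (blockOf v : ℕ) = blockIdx (codeWord v) (n + 1) :=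
  rfl

def IsExceptional (v : Fin (n + 2) → Bool) : Prop :=
  (codeWord v).take (n + 1) = List.replicate n 1 ++ [2]

instance : DecidablePred (IsExceptional (n := n)) := fun _ =>
  inferInstanceAs (Decidable (_ = _))

theorem getD_dirWord_codeWord_eq_one_iff (v : Fin (n + 2) → Bool) :
    (dirWord (codeWord v)).getD (n + 1) 0 = 1 ↔ v (blockOf v) = true := by
  rw [getD_dirWord_eq_getD_blockIdx (fun _ => pos_of_mem_codeWord) (by simp), ← coe_blockOf,
    List.getD_eq_getElem _ _ (by rw [length_codeWord]; exact (blockOf v).isLt), getElem_codeWord]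
  cases v (blockOf v) <;> simp

theorem isExceptional_iff (v : Fin (n + 2) → Bool) :
    IsExceptional v ↔ (codeWord v).take (blockOf v) = List.replicate (blockOf v) 1 ∧
      (blockOf v : ℕ) < n + 1 :=
  (take_blockIdx_eq_replicate_and_lt_iff (fun _ => eq_one_or_eq_two_of_mem_codeWord)
    (by simp : n + 1 < (codeWord v).length)).symm

theorem apply_blockOf_of_isExceptional {v : Fin (n + 2) → Bool} (h : IsExceptional v) :
    v (blockOf v) = false := by
  have hb : (blockOf v : ℕ) = n := blockIdx_eq_of_take_eq h
  have h2 : (codeWord v)[n]? = some 2 := by simpa using congrArg (·[n]?) h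
  have h3 := getElem_codeWord v (blockOf v)
  simp only [hb] at h3
  rw [List.getElem?_eq_getElem (by simp), h3] at h2
  revert h2
  cases v (blockOf v) <;> simp

theorem blockOf_update {v : Fin (n + 2) → Bool} (h : ¬ IsExceptional v) (b : Bool) :
    blockOf (Function.update v (blockOf v) b) = blockOf v := by
  rw [isExceptional_iff, coe_blockOf] at h
  ext
  rw [coe_blockOf, coe_blockOf, codeWord_update, coe_blockOf]
  exact blockIdx_set (fun _ => pos_of_mem_codeWord) (by simp) (by cases b <;> simp) h

theorem not_isExceptional_update {v : Fin (n + 2) → Bool} (h : ¬ IsExceptional v) (b : Bool) :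
    ¬ IsExceptional (Function.update v (blockOf v) b) := by
  rw [isExceptional_iff, blockOf_update h, codeWord_update, List.take_set_of_le le_rfl]
  exact (isExceptional_iff v).not.1 h

theorem sum_cubeWeight_isExceptional (p : ℝ) :
    ∑ v : Fin (n + 2) → Bool with IsExceptional v, cubeWeight p v = p ^ n * (1 - p) := by
  have h : ∀ v : Fin (n + 2) → Bool,
      IsExceptional v ↔ Fin.init v = Fin.snoc (fun _ : Fin n => true) false := by
    intro v
    rw [IsExceptional, take_codeWord_eq_codeWord_init, ← codeWord_injective.eq_iff,
      codeWord_snoc, codeWord_const_true]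
    rfl
  rw [Finset.filter_congr (fun v _ => h v), sum_cubeWeight_filter_init_eq, cubeWeight_snoc]
  simp [cubeWeight]

theorem sum_cubeWeight_getD_dirWord_eq_one (p : ℝ) :
    ∑ v : Fin (n + 2) → Bool with (dirWord (codeWord v)).getD (n + 1) 0 = 1, cubeWeight p v =
      p * (1 - p ^ n * (1 - p)) := by
  have hfilter :
      ({v | (dirWord (codeWord v)).getD (n + 1) 0 = 1} : Finset (Fin (n + 2) → Bool)) =
        ({v | ¬ IsExceptional v ∧ v (blockOf v) = true} : Finset (Fin (n + 2) → Bool)) := by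
    ext v
    simp only [Finset.mem_filter, Finset.mem_univ, true_and, getD_dirWord_codeWord_eq_one_iff]
    refine ⟨fun h => ⟨fun hex => ?_, h⟩, And.right⟩
    simp [apply_blockOf_of_isExceptional hex] at h
  rw [hfilter, ← Finset.filter_filter, sum_cubeWeight_filter_apply_eq_true p _ blockOf
    (fun v hv b => by simpa using not_isExceptional_update (by simpa using hv) b)
    (fun v hv b => blockOf_update (by simpa using hv) b)]
  rw [← sum_cubeWeight_isExceptional p, ← sum_cubeWeight (N := n + 2) p,
    ← Finset.sum_filter_add_sum_filter_not Finset.univ IsExceptional]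
  ring

end BlockOf

open MeasureTheory ProbabilityTheory Filter

def firstLetters {Ω : Type*} (T : ℕ → Ω → ℕ) (N : ℕ) (ω : Ω) : List ℕ :=
  List.ofFn fun i : Fin N => T (i + 1) ω

theorem firstLetters_preimage_codeWord {Ω : Type*} {T : ℕ → Ω → ℕ} {N : ℕ} (v : Fin N → Bool) :
    firstLetters T N ⁻¹' {codeWord v} = ⋂ i : Fin N, T (i + 1) ⁻¹' {cond (v i) 1 2} := by
  ext ω
  simp [firstLetters, codeWord, List.ofFn_inj, funext_iff]

section Law

variable {Ω : Type*} [MeasurableSpace Ω] {μ : Measure Ω} {p : ℝ} {T : ℕ → Ω → ℕ} {N : ℕ}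

theorem measure_letter_eq_cond (h1 : ∀ n, 1 ≤ n → μ {ω | T n ω = 1} = ENNReal.ofReal p)
    (h2 : ∀ n, 1 ≤ n → μ {ω | T n ω = 2} = ENNReal.ofReal (1 - p)) {k : ℕ} (hk : 1 ≤ k)
    (b : Bool) : μ {ω | T k ω = cond b 1 2} = ENNReal.ofReal (cond b p (1 - p)) := by
  cases b
  exacts [h2 k hk, h1 k hk]

theorem ae_eq_one_or_eq_two [IsProbabilityMeasure μ] (hp : p ∈ Set.Icc (0 : ℝ) 1)
    (hmeas : ∀ n, Measurable (T n))
    (h1 : ∀ n, 1 ≤ n → μ {ω | T n ω = 1} = ENNReal.ofReal p)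
    (h2 : ∀ n, 1 ≤ n → μ {ω | T n ω = 2} = ENNReal.ofReal (1 - p)) {k : ℕ} (hk : 1 ≤ k) :
    ∀ᵐ ω ∂μ, T k ω = 1 ∨ T k ω = 2 := by
  have hdisj : Disjoint {ω | T k ω = 1} {ω | T k ω = 2} :=
    Set.disjoint_left.2 fun ω h h' => by simp_all
  refine (mem_ae_iff_prob_eq_one ((hmeas k (measurableSet_singleton 1)).union
    (hmeas k (measurableSet_singleton 2)))).2 ?_
  change μ ({ω | T k ω = 1} ∪ {ω | T k ω = 2}) = 1
  rw [measure_union hdisj (hmeas k (measurableSet_singleton 2)), h1 k hk, h2 k hk,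
    ← ENNReal.ofReal_add hp.1 (by linarith [hp.2])]
  simp

theorem measure_firstLetters_preimage_codeWord (hp : p ∈ Set.Icc (0 : ℝ) 1)
    (hindep : iIndepFun T μ) (h1 : ∀ n, 1 ≤ n → μ {ω | T n ω = 1} = ENNReal.ofReal p)
    (h2 : ∀ n, 1 ≤ n → μ {ω | T n ω = 2} = ENNReal.ofReal (1 - p)) (v : Fin N → Bool) :
    μ (firstLetters T N ⁻¹' {codeWord v}) = ENNReal.ofReal (cubeWeight p v) := by
  have hindep' : iIndepFun (fun i : Fin N => T (i + 1)) μ :=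
    hindep.precomp (g := fun i : Fin N => (i : ℕ) + 1) fun i j h => Fin.ext (by simpa using h)
  rw [firstLetters_preimage_codeWord,
    hindep'.meas_iInter fun i => ⟨{cond (v i) 1 2}, measurableSet_singleton _, rfl⟩,
    cubeWeight, ENNReal.ofReal_prod_of_nonneg fun i _ => by cases v i <;> simp [hp.1, hp.2]]
  exact Finset.prod_congr rfl fun i _ => measure_letter_eq_cond h1 h2 (by omega) (v i)

theorem measure_firstLetters_preimage [IsProbabilityMeasure μ] (hp : p ∈ Set.Icc (0 : ℝ) 1)
    (hmeas : ∀ n, Measurable (T n)) (hindep : iIndepFun T μ)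
    (h1 : ∀ n, 1 ≤ n → μ {ω | T n ω = 1} = ENNReal.ofReal p)
    (h2 : ∀ n, 1 ≤ n → μ {ω | T n ω = 2} = ENNReal.ofReal (1 - p))
    (S : Set (List ℕ)) [DecidablePred (· ∈ S)] :
    μ (firstLetters T N ⁻¹' S) =
      ENNReal.ofReal (∑ v : Fin N → Bool with codeWord v ∈ S, cubeWeight p v) := by
  have hae : ∀ᵐ ω ∂μ, ∃ v : Fin N → Bool, firstLetters T N ω = codeWord v := by
    filter_upwards [ae_all_iff.2 fun i : Fin N => ae_eq_one_or_eq_two hp hmeas h1 h2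
      (k := i + 1) (by omega)] with ω hω
    refine ⟨fun i => decide (T (i + 1) ω = 1), List.ofFn_inj.2 (funext fun i => ?_)⟩
    rcases hω i with h | h <;> simp [h]
  have hset : firstLetters T N ⁻¹' S =ᵐ[μ]
      ⋃ v ∈ ({v | codeWord v ∈ S} : Finset (Fin N → Bool)),
        firstLetters T N ⁻¹' {codeWord v} := by
    refine eventuallyEq_set.2 (hae.mono fun ω ⟨v, hv⟩ => ?_)
    simp [hv, codeWord_injective.eq_iff]
  rw [measure_congr hset, measure_biUnion_finset, ENNReal.ofReal_sum_of_nonneg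
    fun v _ => cubeWeight_nonneg hp v]
  · exact Finset.sum_congr rfl fun v _ => measure_firstLetters_preimage_codeWord hp hindep h1 h2 v
  · exact fun u _ v _ huv => Disjoint.preimage _
      (Set.disjoint_singleton.2 (codeWord_injective.ne huv))
  · intro v _
    rw [firstLetters_preimage_codeWord]
    exact MeasurableSet.iInter fun i => hmeas _ (measurableSet_singleton _)

end Law

/-- for an i.i.d. directing sequence over {1,2} with
P(T_n = 1) = p ∈ (0,1), the directed sequence X = O_T satisfies, for n ≥ 2,
P(X_n = 1) = p(1 - p^{n-2} + p^{n-1}). -/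
theorem stmt8 {Ω : Type*} [MeasurableSpace Ω] (μ : Measure Ω)
    [IsProbabilityMeasure μ] (p : ℝ) (hp : p ∈ Set.Ioo (0 : ℝ) 1)
    (T : ℕ → Ω → ℕ) (hmeas : ∀ n, Measurable (T n))
    (hindep : iIndepFun T μ)
    (h1 : ∀ n, 1 ≤ n → μ {ω | T n ω = 1} = ENNReal.ofReal p)
    (h2 : ∀ n, 1 ≤ n → μ {ω | T n ω = 2} = ENNReal.ofReal (1 - p)) :
    ∀ n, 2 ≤ n →
      μ {ω | dirSeq (fun k => T k ω) n = 1}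
        = ENNReal.ofReal (p * (1 - p ^ (n - 2) + p ^ (n - 1))) := by
  intro n hn
  obtain ⟨n, rfl⟩ := Nat.exists_eq_add_of_le' hn
  have h := measure_firstLetters_preimage (N := n + 2) (Set.Ioo_subset_Icc_self hp) hmeas hindep
    h1 h2 {L | (dirWord L).getD (n + 1) 0 = 1}
  simp only [Set.mem_ofPred_eq, sum_cubeWeight_getD_dirWord_eq_one] at h
  rw [show n + 2 - 2 = n by omega, show n + 2 - 1 = n + 1 by omega]
  rw [show p * (1 - p ^ n * (1 - p)) = p * (1 - p ^ n + p ^ (n + 1)) by ring] at h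
  exact h
end

section
/- Strong law of large numbers with weak correlations (Lyons): if (Y_n) are real random variables with |Y_n| ≤ 1 a.s. and E(Y_m Y_n) ≤ Φ(|n − m|) for a nonnegative function Φ with Σ_{n≥1} Φ(n)/n < ∞, then (1/n) Σ_{k=1}^n Y_k → 0 almost surely. -/
/-!
Write `S N = ∑_{k ≤ N} Y k`. Expanding the square and bounding each correlation by `Φ`
gives `E[S N ^ 2] ≤ N (Φ 0 + 2 ∑_{d ≤ N} Φ d)`; since `∑_{N ≥ d} N⁻² ≤ 2 / d`, the condition
`∑ Φ d / d < ∞` makes `∑_N E[S N ^ 2] / N ^ 3` finite, so `∑_N S N ^ 2 / N ^ 3 < ∞` almost surely.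
Along such a path, `S` is 1-Lipschitz, so `|S n| ≥ ε n` would force `|S k| ≥ ε n / 2` for the
`≈ ε n / 2` indices `k ∈ [n, n + ε n / 2]`, a block of the series of total mass `> ε ^ 3 / 64`;
this cannot happen for infinitely many `n` once the tails of the series are small.
-/

open MeasureTheory ProbabilityTheory Filter Finset

theorem sum_comp_le_sum_of_injOn {ι κ M : Type*} [AddCommMonoid M] [PartialOrder M]
    [IsOrderedAddMonoid M] [DecidableEq κ] {s : Finset ι} {t : Finset κ} {g : ι → κ} {f : κ → M}
    (hg : Set.InjOn g s) (hst : Set.MapsTo g s t) (hf : ∀ j ∈ t, 0 ≤ f j) :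
    ∑ i ∈ s, f (g i) ≤ ∑ j ∈ t, f j := by
  rw [← sum_image hg]
  exact sum_le_sum_of_subset_of_nonneg (image_subset_iff.2 hst) fun j hj _ => hf j hj

theorem sum_Icc_dist_le {Φ : ℕ → ℝ} (hΦ : ∀ n, 0 ≤ Φ n) {N m : ℕ} (hm : m ≤ N) :
    ∑ n ∈ Icc 1 N, Φ (Nat.dist n m) ≤ Φ 0 + 2 * ∑ d ∈ Icc 1 N, Φ d := by
  rw [← sum_filter_add_sum_filter_not _ (· ≤ m)]
  have hbelow : ∑ n ∈ Icc 1 N with n ≤ m, Φ (Nat.dist n m) ≤ ∑ d ∈ insert 0 (Icc 1 N), Φ d := by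
    refine sum_comp_le_sum_of_injOn (fun x hx y hy hxy => ?_) (fun x hx => ?_) fun d _ => hΦ d
    · simp only [coe_filter, mem_Icc, Set.mem_ofPred_eq, Nat.dist] at hx hy hxy
      omega
    · simp only [coe_filter, coe_insert, coe_Icc, mem_Icc, Set.mem_ofPred_eq, Set.mem_insert_iff,
        Set.mem_Icc, Nat.dist] at hx ⊢
      omega
  have habove : ∑ n ∈ Icc 1 N with ¬ n ≤ m, Φ (Nat.dist n m) ≤ ∑ d ∈ Icc 1 N, Φ d := by
    refine sum_comp_le_sum_of_injOn (fun x hx y hy hxy => ?_) (fun x hx => ?_) fun d _ => hΦ d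
    · simp only [coe_filter, mem_Icc, Set.mem_ofPred_eq, Nat.dist] at hx hy hxy
      omega
    · simp only [coe_filter, coe_Icc, mem_Icc, Set.mem_ofPred_eq, Set.mem_Icc, Nat.dist] at hx ⊢
      omega
  rw [sum_insert (by simp)] at hbelow
  linarith

section SecondMoment

variable {Ω : Type*} [MeasurableSpace Ω] {μ : Measure Ω}

theorem integrable_mul_of_ae_abs_le_one [IsFiniteMeasure μ] {f g : Ω → ℝ}
    (hf : AEStronglyMeasurable f μ) (hg : AEStronglyMeasurable g μ)
    (hf1 : ∀ᵐ ω ∂μ, |f ω| ≤ 1) (hg1 : ∀ᵐ ω ∂μ, |g ω| ≤ 1) :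
    Integrable (fun ω => f ω * g ω) μ :=
  (Integrable.of_bound hg 1 hg1).bdd_mul hf hf1

theorem integrable_sq_sum {ι : Type*} {Y : ι → Ω → ℝ} (s : Finset ι)
    (hY : ∀ m ∈ s, ∀ n ∈ s, Integrable (fun ω => Y m ω * Y n ω) μ) :
    Integrable (fun ω => (∑ k ∈ s, Y k ω) ^ 2) μ := by
  simp_rw [sq, sum_mul_sum]
  exact integrable_finsetSum _ fun m hm => integrable_finsetSum _ (hY m hm)

theorem integral_sq_sum_eq {ι : Type*} {Y : ι → Ω → ℝ} (s : Finset ι)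
    (hY : ∀ m ∈ s, ∀ n ∈ s, Integrable (fun ω => Y m ω * Y n ω) μ) :
    ∫ ω, (∑ k ∈ s, Y k ω) ^ 2 ∂μ = ∑ m ∈ s, ∑ n ∈ s, ∫ ω, Y m ω * Y n ω ∂μ := by
  simp_rw [sq, sum_mul_sum]
  rw [integral_finsetSum _ fun m hm => integrable_finsetSum _ (hY m hm)]
  exact sum_congr rfl fun m hm => integral_finsetSum _ (hY m hm)

theorem integral_sq_sum_Icc_le {Y : ℕ → Ω → ℝ} {Φ : ℕ → ℝ} (hΦ : ∀ n, 0 ≤ Φ n)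
    (hY : ∀ m n, 1 ≤ m → 1 ≤ n → Integrable (fun ω => Y m ω * Y n ω) μ)
    (hcorr : ∀ m n, 1 ≤ m → 1 ≤ n → ∫ ω, Y m ω * Y n ω ∂μ ≤ Φ (Nat.dist n m)) (N : ℕ) :
    ∫ ω, (∑ k ∈ Icc 1 N, Y k ω) ^ 2 ∂μ ≤ N * (Φ 0 + 2 * ∑ d ∈ Icc 1 N, Φ d) := by
  rw [integral_sq_sum_eq _ fun m hm n hn => hY m n (mem_Icc.1 hm).1 (mem_Icc.1 hn).1]
  calc ∑ m ∈ Icc 1 N, ∑ n ∈ Icc 1 N, ∫ ω, Y m ω * Y n ω ∂μ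
      ≤ ∑ m ∈ Icc 1 N, ∑ n ∈ Icc 1 N, Φ (Nat.dist n m) :=
        sum_le_sum fun m hm => sum_le_sum fun n hn =>
          hcorr m n (mem_Icc.1 hm).1 (mem_Icc.1 hn).1
    _ ≤ ∑ m ∈ Icc 1 N, (Φ 0 + 2 * ∑ d ∈ Icc 1 N, Φ d) :=
        sum_le_sum fun m hm => sum_Icc_dist_le hΦ (mem_Icc.1 hm).2
    _ = N * (Φ 0 + 2 * ∑ d ∈ Icc 1 N, Φ d) := by simp [mul_add]

end SecondMoment

theorem summable_sum_Icc_div_sq {Φ : ℕ → ℝ} (hΦ : ∀ n, 0 ≤ Φ n)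
    (hsum : Summable fun d : ℕ => Φ d / d) :
    Summable fun N : ℕ => (∑ d ∈ Icc 1 N, Φ d) / (N : ℝ) ^ 2 := by
  refine summable_of_sum_range_le (c := 2 * ∑' d : ℕ, Φ d / d)
    (fun N => div_nonneg (sum_nonneg fun d _ => hΦ d) (sq_nonneg _)) fun M => ?_
  have htail : ∀ d ∈ Ioo 0 M, ∑ N ∈ Ioo (d - 1) M, ((N : ℝ) ^ 2)⁻¹ ≤ 2 / d := fun d hd => by
    have := sum_Ioo_inv_sq_le (α := ℝ) (d - 1) M
    rwa [Nat.cast_sub (by simp at hd; omega), Nat.cast_one, sub_add_cancel] at this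
  calc ∑ N ∈ range M, (∑ d ∈ Icc 1 N, Φ d) / (N : ℝ) ^ 2
      = ∑ d ∈ Ioo 0 M, Φ d * ∑ N ∈ Ioo (d - 1) M, ((N : ℝ) ^ 2)⁻¹ := by
        simp_rw [sum_div, mul_sum, div_eq_mul_inv]
        exact sum_comm' fun N d => by simp only [mem_range, mem_Icc, mem_Ioo]; omega
    _ ≤ ∑ d ∈ Ioo 0 M, 2 * (Φ d / d) := sum_le_sum fun d hd => by
        grw [htail d hd]
        · exact (mul_div_left_comm _ _ _).le
        · exact hΦ d
    _ ≤ 2 * ∑' d : ℕ, Φ d / d := by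
        rw [← mul_sum]
        gcongr
        exact hsum.sum_le_tsum _ fun d _ => div_nonneg (hΦ d) d.cast_nonneg

theorem ae_summable_of_summable_integral {Ω ι : Type*} [MeasurableSpace Ω] {μ : Measure Ω}
    [Countable ι] {f : ι → Ω → ℝ} (hf : ∀ i, Integrable (f i) μ) (hf0 : ∀ i, 0 ≤ᵐ[μ] f i)
    (hsum : Summable fun i => ∫ ω, f i ω ∂μ) :
    ∀ᵐ ω ∂μ, Summable fun i => f i ω := by
  have hnorm : ∑' i, eLpNorm (f i) 1 μ ≠ ⊤ := by
    have heq : ∀ i, eLpNorm (f i) 1 μ = ENNReal.ofReal (∫ ω, f i ω ∂μ) := fun i => by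
      rw [eLpNorm_one_eq_lintegral_enorm, ofReal_integral_eq_lintegral_ofReal (hf i) (hf0 i)]
      refine lintegral_congr_ae ((hf0 i).mono fun ω hω => ?_)
      exact Real.enorm_of_nonneg hω
    simp_rw [heq, ← ENNReal.ofReal_tsum_of_nonneg (fun i => integral_nonneg_of_ae (hf0 i)) hsum]
    exact ENNReal.ofReal_ne_top
  filter_upwards [summable_norm_of_tsum_eLpNorm_ne_top le_rfl (fun i => (hf i).1) hnorm,
    ae_all_iff.2 hf0] with ω hω hω0
  exact hω.congr fun i => Real.norm_of_nonneg (hω0 i)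

theorem summable_div_cube_of_le {Φ : ℕ → ℝ} (hΦ : ∀ n, 0 ≤ Φ n)
    (hsum : Summable fun d : ℕ => Φ d / d) {a : ℕ → ℝ} (ha0 : ∀ N, 0 ≤ a N)
    (ha : ∀ N, a N ≤ N * (Φ 0 + 2 * ∑ d ∈ Icc 1 N, Φ d)) :
    Summable fun N : ℕ => a N / (N : ℝ) ^ 3 := by
  have hbound : Summable fun N : ℕ =>
      Φ 0 * ((N : ℝ) ^ 2)⁻¹ + 2 * ((∑ d ∈ Icc 1 N, Φ d) / (N : ℝ) ^ 2) :=
    ((Real.summable_nat_pow_inv.2 one_lt_two).mul_left _).add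
      ((summable_sum_Icc_div_sq hΦ hsum).mul_left 2)
  refine hbound.of_nonneg_of_le (fun N => div_nonneg (ha0 N) (by positivity)) fun N => ?_
  rcases N.eq_zero_or_pos with rfl | hN
  · simp
  · rw [div_le_iff₀ (by positivity)]
    refine (ha N).trans (le_of_eq ?_)
    field_simp

section Deterministic

variable {S : ℕ → ℝ}

theorem lt_sum_sq_div_cube_of_le_abs (hS : ∀ n k, n ≤ k → |S k - S n| ≤ k - n) {e : ℝ}
    (he0 : 0 < e) (he1 : e ≤ 1) {n : ℕ} (hn : 0 < n) (hSn : e * n ≤ |S n|) :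
    e ^ 3 / 64 < ∑ k ∈ Icc n (n + ⌊e * n / 2⌋₊), S k ^ 2 / (k : ℝ) ^ 3 := by
  set L := ⌊e * n / 2⌋₊
  have hn' : (0 : ℝ) < n := by exact_mod_cast hn
  have hL : (L : ℝ) ≤ e * n / 2 := Nat.floor_le (by positivity)
  have hterm : ∀ k ∈ Icc n (n + L), e ^ 2 / (32 * n) ≤ S k ^ 2 / (k : ℝ) ^ 3 := by
    intro k hk
    obtain ⟨hnk, hkL⟩ := mem_Icc.1 hk
    have hnk' : (n : ℝ) ≤ k := by exact_mod_cast hnk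
    have hkL' : (k : ℝ) ≤ n + L := by exact_mod_cast hkL
    have hSk : e * n / 2 ≤ |S k| := by
      have := abs_sub_abs_le_abs_sub (S n) (S k)
      rw [abs_sub_comm] at this
      linarith [hS n k hnk]
    calc e ^ 2 / (32 * n) = (e * n / 2) ^ 2 / (2 * n) ^ 3 := by field_simp; ring
      _ ≤ S k ^ 2 / (k : ℝ) ^ 3 := by
        refine div_le_div₀ (sq_nonneg _) ?_ (pow_pos (hn'.trans_le hnk') 3) ?_
        · rw [← sq_abs (S k)]
          gcongr
        · gcongr
          linarith [mul_le_of_le_one_left hn'.le he1]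
  have hcard : e * n / 2 < (L : ℝ) + 1 := Nat.lt_floor_add_one _
  calc e ^ 3 / 64 = e * n / 2 * (e ^ 2 / (32 * n)) := by field_simp; ring
    _ < ((L : ℝ) + 1) * (e ^ 2 / (32 * n)) := by gcongr
    _ = ∑ k ∈ Icc n (n + L), e ^ 2 / (32 * n) := by
        simp [show n + L + 1 - n = L + 1 by omega]
    _ ≤ ∑ k ∈ Icc n (n + L), S k ^ 2 / (k : ℝ) ^ 3 := sum_le_sum hterm

theorem tendsto_div_of_summable_sq_div_cube (hS : ∀ n k, n ≤ k → |S k - S n| ≤ k - n)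
    (hsum : Summable fun N : ℕ => S N ^ 2 / (N : ℝ) ^ 3) :
    Tendsto (fun n : ℕ => S n / n) atTop (nhds 0) := by
  set t := fun N : ℕ => S N ^ 2 / (N : ℝ) ^ 3
  have htail : Tendsto (fun n => ∑' k, t k - ∑ k ∈ range n, t k) atTop (nhds 0) := by
    simpa only [sub_self] using
      (tendsto_const_nhds (x := ∑' k, t k)).sub hsum.hasSum.tendsto_sum_nat
  have hsmall : ∀ e, 0 < e → e ≤ 1 → ∀ᶠ n : ℕ in atTop, |S n| < e * n := by
    intro e he0 he1
    filter_upwards [htail.eventually (gt_mem_nhds (show (0 : ℝ) < e ^ 3 / 64 by positivity)),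
      eventually_gt_atTop 0] with n hn hn0
    by_contra! hSn
    have hblock : ∑ k ∈ Icc n (n + ⌊e * n / 2⌋₊), t k ≤ ∑' k, t k - ∑ k ∈ range n, t k := by
      rw [← Ico_add_one_right_eq_Icc, le_sub_iff_add_le', sum_range_add_sum_Ico _ (by omega)]
      exact hsum.sum_le_tsum _ fun k _ => by positivity
    linarith [lt_sum_sq_div_cube_of_le_abs hS he0 he1 hn0 hSn]
  refine Metric.tendsto_nhds.2 fun ε hε => ?_
  filter_upwards [hsmall (min ε 1) (lt_min hε one_pos) (min_le_right _ _),
    eventually_gt_atTop 0] with n hn hn0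
  rw [Real.dist_eq, sub_zero, abs_div, Nat.abs_cast, div_lt_iff₀ (by positivity)]
  exact hn.trans_le (mul_le_mul_of_nonneg_right (min_le_left _ _) n.cast_nonneg)

end Deterministic

theorem abs_sum_Icc_sub_sum_Icc_le {a : ℕ → ℝ} (ha : ∀ k, 1 ≤ k → |a k| ≤ 1) {n k : ℕ}
    (h : n ≤ k) : |∑ i ∈ Icc 1 k, a i - ∑ i ∈ Icc 1 n, a i| ≤ k - n := by
  have hIcc : ∀ m, Icc 1 m = Ioc 0 m := fun m => Icc_add_one_left_eq_Ioc 0 m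
  rw [hIcc, hIcc, ← sum_Ioc_consecutive _ n.zero_le h, add_sub_cancel_left]
  calc |∑ i ∈ Ioc n k, a i| ≤ ∑ i ∈ Ioc n k, |a i| := abs_sum_le_sum_abs _ _
    _ ≤ ∑ i ∈ Ioc n k, 1 := sum_le_sum fun i hi => ha i (by simp only [mem_Ioc] at hi; omega)
    _ = k - n := by simp [Nat.cast_sub h]

/-- Lyons: strong law of large numbers under weak correlations:
if |Y_n| ≤ 1 a.s. and E(Y_m Y_n) ≤ Φ(|n-m|) with Φ ≥ 0 and Σ_{n≥1} Φ(n)/n < ∞,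
then (1/n) Σ_{k=1}^n Y_k → 0 almost surely. -/
theorem stmt10 {Ω : Type*} [MeasurableSpace Ω] (μ : Measure Ω)
    [IsProbabilityMeasure μ] (Y : ℕ → Ω → ℝ) (Φ : ℕ → ℝ)
    (hmeas : ∀ n, Measurable (Y n))
    (hbdd : ∀ n, 1 ≤ n → ∀ᵐ ω ∂μ, |Y n ω| ≤ 1)
    (hΦ : ∀ n, 0 ≤ Φ n)
    (hsum : Summable (fun n : ℕ => Φ (n + 1) / (n + 1)))
    (hcorr : ∀ m n, 1 ≤ m → 1 ≤ n → ∫ ω, Y m ω * Y n ω ∂μ ≤ Φ (Nat.dist n m)) :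
    ∀ᵐ ω ∂μ, Tendsto (fun n : ℕ => (∑ k ∈ Finset.Icc 1 n, Y k ω) / n)
      atTop (nhds 0) := by
  have hY1 : ∀ᵐ ω ∂μ, ∀ n, 1 ≤ n → |Y n ω| ≤ 1 :=
    (ae_ball_iff (Set.to_countable (Set.Ici 1))).2 hbdd
  have hprod : ∀ m n, 1 ≤ m → 1 ≤ n → Integrable (fun ω => Y m ω * Y n ω) μ := fun m n hm hn =>
    integrable_mul_of_ae_abs_le_one (hmeas m).aestronglyMeasurable
      (hmeas n).aestronglyMeasurable (hbdd m hm) (hbdd n hn)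
  have hsq : ∀ N, Integrable (fun ω => (∑ k ∈ Icc 1 N, Y k ω) ^ 2) μ := fun N =>
    integrable_sq_sum _ fun m hm n hn => hprod m n (mem_Icc.1 hm).1 (mem_Icc.1 hn).1
  have hΦsum : Summable fun d : ℕ => Φ d / d :=
    (summable_nat_add_iff 1).1 (by exact_mod_cast hsum)
  have hmoments : Summable fun N : ℕ => ∫ ω, (∑ k ∈ Icc 1 N, Y k ω) ^ 2 / (N : ℝ) ^ 3 ∂μ := by
    simp_rw [integral_div]
    exact summable_div_cube_of_le hΦ hΦsum (fun N => integral_nonneg fun ω => sq_nonneg _)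
      (integral_sq_sum_Icc_le hΦ hprod hcorr)
  filter_upwards [ae_summable_of_summable_integral (fun N => (hsq N).div_const _)
    (fun N => ae_of_all _ fun ω => by positivity) hmoments, hY1] with ω hω hω1
  exact tendsto_div_of_summable_sq_div_cube (fun n k h => abs_sum_Icc_sub_sum_Icc_le hω1 h) hω
end

section
/- Let a > 1 and let T be i.i.d. over {1,a} with P(T_n = 1) = p ∈ (0,1), X = O_T. Then for all n ≥ a, P(X_n = 1) = p(1 − p^{n−a} + p^{n−1}). -/
open MeasureTheory ProbabilityTheory Filter

namespace S14

/-- the word after `m` steps -/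
def dw (T : ℕ → ℕ) (m : ℕ) : List ℕ := dirWord (List.ofFn fun i : Fin m => T (i + 1))

lemma foldl_snd (L : List ℕ) (X : List ℕ) (k : ℕ) :
    (L.foldl (fun p t => (dirStep p.1 p.2 t, p.2 + 1)) (X, k)).2 = k + L.length := by
  induction L generalizing X k with
  | nil => simp
  | cons h t ih => simp only [List.foldl_cons, ih, List.length_cons]; omega

lemma dw_zero (T : ℕ → ℕ) : dw T 0 = [] := rfl

lemma dw_succ (T : ℕ → ℕ) (m : ℕ) :
    dw T (m + 1) = dirStep (dw T m) m (T (m + 1)) := by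
  unfold dw dirWord
  rw [List.ofFn_succ', List.concat_eq_append, List.foldl_append]
  simp only [List.foldl_cons, List.foldl_nil]
  rw [show ((List.ofFn fun i : Fin m => T (i.castSucc + 1)).foldl
      (fun p t => (dirStep p.1 p.2 t, p.2 + 1)) (([] : List ℕ), 0)).2 = m from by
    rw [foldl_snd]; simp]
  rfl

lemma dirSeq_eq_dw (T : ℕ → ℕ) (n : ℕ) : dirSeq T n = (dw T n).getD (n - 1) 0 := rfl

lemma dw_congr {T T' : ℕ → ℕ} (m : ℕ) (h : ∀ i, 1 ≤ i → i ≤ m → T i = T' i) :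
    dw T m = dw T' m := by
  unfold dw
  congr 1
  exact congrArg List.ofFn (funext fun i => h _ (Nat.le_add_left 1 i) (by have := i.isLt; omega))

lemma len_ge (T : ℕ → ℕ) (m : ℕ) : m ≤ (dw T m).length := by
  induction m with
  | zero => simp [dw_zero]
  | succ m ih =>
    rw [dw_succ]
    simp only [dirStep, List.length_append, List.length_replicate, List.length_cons]
    simp only [List.length_append, List.length_cons, List.length_nil]
    omega

lemma dw_prefix_succ (T : ℕ → ℕ) (m : ℕ) : dw T m <+: dw T (m + 1) := by
  rw [dw_succ]
  exact ⟨[T (m+1)] ++ List.replicate (((dw T m ++ [T (m+1)]).getD m 1) - 1) (T (m+1)), by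
    simp [dirStep, List.append_assoc]⟩

lemma dw_prefix (T : ℕ → ℕ) {m m' : ℕ} (h : m ≤ m') : dw T m <+: dw T m' := by
  induction m' with
  | zero => rw [Nat.le_zero.mp h]
  | succ k ih =>
    rcases Nat.lt_or_ge m (k+1) with h' | h'
    · exact (ih (Nat.lt_succ_iff.mp h')).trans (dw_prefix_succ T k)
    · have : m = k + 1 := le_antisymm h h'
      rw [this]

lemma len_mono (T : ℕ → ℕ) {m m' : ℕ} (h : m ≤ m') : (dw T m).length ≤ (dw T m').length :=
  (dw_prefix T h).length_le

lemma getD_stable (T : ℕ → ℕ) {m m' j : ℕ} (h : m ≤ m') (hj : j < (dw T m).length) :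
    (dw T m').getD j 0 = (dw T m).getD j 0 := by
  obtain ⟨r, hr⟩ := dw_prefix T h
  rw [← hr, List.getD_append _ _ _ _ hj]



lemma dirStep_eq (X : List ℕ) (k t : ℕ) :
    dirStep X k t = (X ++ [t]) ++ List.replicate ((X ++ [t]).getD k 1 - 1) t := rfl

lemma cons_replicate_sub (t k : ℕ) (hk : 1 ≤ k) :
    [t] ++ List.replicate (k - 1) t = List.replicate k t := by
  obtain ⟨k', rfl⟩ : ∃ k', k = k' + 1 := ⟨k - 1, by omega⟩
  simp [List.replicate_succ]

variable {a : ℕ}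

lemma letters (T : ℕ → ℕ) (m : ℕ) (hT : ∀ i, 1 ≤ i → i ≤ m → T i = 1 ∨ T i = a) :
    ∀ x ∈ dw T m, x = 1 ∨ x = a := by
  induction m with
  | zero => simp [dw_zero]
  | succ m ih =>
    rw [dw_succ, dirStep_eq]
    intro x hx
    have ht := hT (m + 1) (by omega) le_rfl
    simp only [List.mem_append, List.mem_singleton, List.mem_replicate] at hx
    rcases hx with (hx | hx) | hx
    · exact ih (fun i h1 h2 => hT i h1 (by omega)) x hx
    · rw [hx]; exact ht
    · rw [hx.2]; exact ht

lemma dw_block (T : ℕ → ℕ) (m : ℕ)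
    (hT : ∀ i, 1 ≤ i → i ≤ m → T i = 1 ∨ T i = a)
    (hd : m < (dw T m).length ∨ (T (m + 1) = 1 ∨ T (m + 1) = a)) (ha : 1 ≤ a) :
    dw T (m + 1) = dw T m ++ List.replicate (dirSeq T (m + 1)) (T (m + 1))
    ∧ (dirSeq T (m + 1) = 1 ∨ dirSeq T (m + 1) = a) := by
  set t := T (m + 1) with htdef
  set d := (dw T m ++ [t]).getD m 1 with hdd
  have hlen : m ≤ (dw T m).length := len_ge T m
  have hdm : d = 1 ∨ d = a := by
    rcases Nat.lt_or_ge m (dw T m).length with h | h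
    · have hh : d = (dw T m)[m] := by
        rw [hdd, List.getD_eq_getElem _ _ (by simp; omega), List.getElem_append_left h]
      rw [hh]
      exact letters T m hT _ (List.getElem_mem _)
    · have hm : m = (dw T m).length := by omega
      have hh : d = t := by
        rw [hdd, List.getD_eq_getElem _ _ (by simp; omega)]
        rw [List.getElem_append_right (by omega)]
        have h0 : m - (dw T m).length = 0 := by omega
        simp [h0]
      rw [hh]
      rcases hd with h' | h'
      · omega
      · exact h'
  have h1 : dirSeq T (m + 1) = d := by
    rw [dirSeq_eq_dw, Nat.add_sub_cancel, dw_succ, dirStep_eq]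
    rw [List.getD_append _ _ _ _ (by simp; omega)]
    rw [hdd, List.getD_eq_getElem _ _ (by simp; omega), List.getD_eq_getElem _ _ (by simp; omega)]
  constructor
  · rw [dw_succ, dirStep_eq, List.append_assoc, h1, ← hdd]
    congr 1
    exact cons_replicate_sub t d (by rcases hdm with h | h <;> omega)
  · rw [h1]; exact hdm

lemma dw_len_succ (T : ℕ → ℕ) (m : ℕ)
    (hT : ∀ i, 1 ≤ i → i ≤ m → T i = 1 ∨ T i = a)
    (hd : m < (dw T m).length ∨ (T (m + 1) = 1 ∨ T (m + 1) = a)) (ha : 1 ≤ a) :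
    (dw T (m + 1)).length = (dw T m).length + dirSeq T (m + 1) := by
  rw [(dw_block T m hT hd ha).1]; simp

lemma dw_allones (T : ℕ → ℕ) (m : ℕ) (h : ∀ i, 1 ≤ i → i ≤ m → T i = 1) :
    dw T m = List.replicate m 1 := by
  induction m with
  | zero => rfl
  | succ m ih =>
    have ihh := ih (fun i hi him => h i hi (by omega))
    rw [dw_succ, ihh, dirStep_eq, h (m + 1) (by omega) le_rfl]
    rw [List.getD_append_right _ _ _ _ (by simp)]
    simp [List.replicate_succ' ]

lemma dw_firstA (T : ℕ → ℕ) (m : ℕ) (ha : 1 ≤ a)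
    (h1 : ∀ i, 1 ≤ i → i ≤ m → T i = 1) (hA : T (m + 1) = a) :
    dw T (m + 1) = List.replicate m 1 ++ List.replicate a a := by
  rw [dw_succ, dw_allones T m h1, dirStep_eq, hA]
  rw [List.getD_append_right _ _ _ _ (by simp)]
  simp only [List.length_replicate, Nat.sub_self, List.getD_cons_zero]
  rw [List.append_assoc]
  congr 1
  exact cons_replicate_sub a a ha

lemma dirSeq_block (T : ℕ → ℕ) (m n : ℕ)
    (hT : ∀ i, 1 ≤ i → i ≤ m → T i = 1 ∨ T i = a)
    (hd : m < (dw T m).length ∨ (T (m + 1) = 1 ∨ T (m + 1) = a)) (ha : 1 ≤ a)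
    (h1 : (dw T m).length < n) (h2 : n ≤ (dw T (m + 1)).length) :
    dirSeq T n = T (m + 1) := by
  have hb := (dw_block T m hT hd ha).1
  have hlen : (dw T (m + 1)).length = (dw T m).length + dirSeq T (m + 1) := by rw [hb]; simp
  have hmn : m + 1 ≤ n := by have := len_ge T m; omega
  rw [dirSeq_eq_dw, getD_stable T hmn (by omega), hb,
    List.getD_append_right _ _ _ _ (by omega),
    List.getD_eq_getElem _ _ (by simp; omega), List.getElem_replicate]

lemma allones_of_len (T : ℕ → ℕ) (m : ℕ)
    (hT : ∀ i, 1 ≤ i → i ≤ m → T i = 1 ∨ T i = a) (ha : 1 ≤ a)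
    (hlen : (dw T m).length = m) :
    ∀ i, 1 ≤ i → i ≤ m → T i = 1 := by
  induction m with
  | zero => intro i hi him; omega
  | succ m ih =>
    have hTm : ∀ i, 1 ≤ i → i ≤ m → T i = 1 ∨ T i = a := fun i hi h => hT i hi (by omega)
    have hb := dw_block T m hTm (Or.inr (hT (m + 1) (by omega) le_rfl)) ha
    have hlen2 : (dw T (m + 1)).length = (dw T m).length + dirSeq T (m + 1) := by
      rw [hb.1]; simp
    have hX : 1 ≤ dirSeq T (m + 1) := by rcases hb.2 with h | h <;> omega
    have hlm : (dw T m).length = m := by have := len_ge T m; omega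
    have hX1 : dirSeq T (m + 1) = 1 := by omega
    have h5 : dirSeq T (m + 1) = T (m + 1) := by
      rw [dirSeq_eq_dw, Nat.add_sub_cancel, hb.1,
        List.getD_append_right _ _ _ _ (by omega), hlm, Nat.sub_self,
        List.getD_eq_getElem _ _ (by simp; omega), List.getElem_replicate]
    intro i hi him
    rcases Nat.lt_or_ge i (m + 1) with h | h
    · exact ih hTm hlm i hi (by omega)
    · have hieq : i = m + 1 := by omega
      rw [hieq]; omega

lemma len_ge_succ_of_a (T : ℕ → ℕ) (m : ℕ)
    (hT : ∀ i, 1 ≤ i → i ≤ m → T i = 1 ∨ T i = a) (ha : 1 < a)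
    (hw : ∃ i, 1 ≤ i ∧ i ≤ m ∧ T i = a) :
    m + 1 ≤ (dw T m).length := by
  have hlen := len_ge T m
  rcases Nat.lt_or_ge m (dw T m).length with h | h
  · omega
  · exfalso
    obtain ⟨i, hi1, hi2, hia⟩ := hw
    have := allones_of_len T m hT (by omega) (by omega) i hi1 hi2
    omega

lemma dirSeq_stable (T : ℕ → ℕ) (b : ℕ) (hb : 1 ≤ b) (h : b ≤ (dw T (b - 1)).length) :
    dirSeq T b = (dw T (b - 1)).getD (b - 1) 0 := by
  rw [dirSeq_eq_dw]
  exact getD_stable T (by omega) (by omega)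

section Meas

variable {Ω : Type*} [MeasurableSpace Ω]

lemma measurableSet_pi_nat {s : Finset ℕ} (E : Set ((i : s) → ℕ)) : MeasurableSet E :=
  E.to_countable.measurableSet

omit [MeasurableSpace Ω] in
lemma dep_preimage (T : ℕ → Ω → ℕ) (s : Finset ℕ) (A : Set Ω)
    (hdep : ∀ ω ω', (∀ i ∈ s, T i ω = T i ω') → ω ∈ A → ω' ∈ A) :
    A = (fun ω (i : s) => T i ω) ⁻¹' ((fun ω (i : s) => T i ω) '' A) := by
  apply Set.Subset.antisymm
  · exact Set.subset_preimage_image _ _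
  · rintro ω hω
    obtain ⟨ω₀, hω₀A, hV⟩ := hω
    exact hdep ω₀ ω (fun i hi => congrFun hV ⟨i, hi⟩) hω₀A

lemma meas_of_dep (T : ℕ → Ω → ℕ) (hmeas : ∀ n, Measurable (T n)) (s : Finset ℕ) (A : Set Ω)
    (hdep : ∀ ω ω', (∀ i ∈ s, T i ω = T i ω') → ω ∈ A → ω' ∈ A) :
    MeasurableSet A := by
  rw [dep_preimage T s A hdep]
  have hV : Measurable (fun ω (i : s) => T i ω) := measurable_pi_lambda _ fun i => hmeas i
  exact hV (measurableSet_pi_nat _)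

open MeasureTheory ProbabilityTheory in
lemma indep_mul (μ : MeasureTheory.Measure Ω) (T : ℕ → Ω → ℕ) (hmeas : ∀ n, Measurable (T n))
    (hindep : iIndepFun T μ)
    (s : Finset ℕ) (b : ℕ) (hb : b ∉ s) (A : Set Ω)
    (hdep : ∀ ω ω', (∀ i ∈ s, T i ω = T i ω') → ω ∈ A → ω' ∈ A) (c : ℕ) :
    μ (A ∩ T b ⁻¹' {c}) = μ A * μ (T b ⁻¹' {c}) := by
  have hIF := hindep.indepFun_finset s {b} (Finset.disjoint_singleton_right.mpr hb) hmeas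
  have hTb : T b ⁻¹' {c}
      = (fun ω (i : ({b} : Finset ℕ)) => T i ω) ⁻¹' {v | v ⟨b, Finset.mem_singleton_self b⟩ = c} :=
    rfl
  rw [dep_preimage T s A hdep, hTb]
  exact hIF.measure_inter_preimage_eq_mul _ _ (measurableSet_pi_nat _) (measurableSet_pi_nat _)

open MeasureTheory ProbabilityTheory in
lemma prod_ones (μ : MeasureTheory.Measure Ω) (T : ℕ → Ω → ℕ)
    (hindep : iIndepFun T μ) (p : ℝ)
    (h1 : ∀ n, 1 ≤ n → μ {ω | T n ω = 1} = ENNReal.ofReal p) (m : ℕ) :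
    μ (⋂ i ∈ Finset.Icc 1 m, T i ⁻¹' ({1} : Set ℕ)) = ENNReal.ofReal p ^ m := by
  rw [hindep.measure_inter_preimage_eq_mul (Finset.Icc 1 m)
    (sets := fun _ => ({1} : Set ℕ)) (fun i _ => measurableSet_singleton 1)]
  rw [Finset.prod_congr rfl (fun i hi => show μ (T i ⁻¹' {1}) = ENNReal.ofReal p from
    h1 i (Finset.mem_Icc.mp hi).1)]
  rw [Finset.prod_const, Nat.card_Icc]
  congr 1

end Meas
end S14


/-- over the alphabet {1,a} with a > 1, for an i.i.d. directing
sequence with P(T_n = 1) = p ∈ (0,1) and P(T_n = a) = 1 - p, for all n ≥ a,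
P(X_n = 1) = p(1 - p^{n-a} + p^{n-1}). -/
theorem stmt14 {Ω : Type*} [MeasurableSpace Ω] (μ : Measure Ω)
    [IsProbabilityMeasure μ] (a : ℕ) (ha : 1 < a)
    (p : ℝ) (hp : p ∈ Set.Ioo (0 : ℝ) 1)
    (T : ℕ → Ω → ℕ) (hmeas : ∀ n, Measurable (T n))
    (hindep : iIndepFun T μ)
    (h1 : ∀ n, 1 ≤ n → μ {ω | T n ω = 1} = ENNReal.ofReal p)
    (h2 : ∀ n, 1 ≤ n → μ {ω | T n ω = a} = ENNReal.ofReal (1 - p)) :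
    ∀ n, a ≤ n →
      μ {ω | dirSeq (fun k => T k ω) n = 1}
        = ENNReal.ofReal (p * (1 - p ^ (n - a) + p ^ (n - 1))) := by
  classical
  intro n hn
  obtain ⟨hp0, hp1⟩ := hp
  -- the sets
  set good : Set Ω := {ω | ∀ i, 1 ≤ i → i ≤ n → T i ω = 1 ∨ T i ω = a} with hgooddef
  set A1 : Set Ω := ⋂ i ∈ Finset.Icc 1 n, T i ⁻¹' ({1} : Set ℕ) with hA1def
  set A1' : Set Ω := ⋂ i ∈ Finset.Icc 1 (n - a), T i ⁻¹' ({1} : Set ℕ) with hA1'def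
  set ExA : Set Ω := {ω | ∃ i, 1 ≤ i ∧ i ≤ n - a ∧ T i ω = a} with hExAdef
  set D : ℕ → Set Ω := fun b => {ω |
    (∀ i, 1 ≤ i → i ≤ b - 1 → T i ω = 1 ∨ T i ω = a) ∧
    (∃ i, 1 ≤ i ∧ i ≤ n - a ∧ i ≤ b - 1 ∧ T i ω = a) ∧
    (S14.dw (fun k => T k ω) (b - 1)).length < n ∧
    n ≤ (S14.dw (fun k => T k ω) (b - 1)).length
        + (S14.dw (fun k => T k ω) (b - 1)).getD (b - 1) 0} with hDdef
  -- membership unfoldings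
  have memGood : ∀ ω, ω ∈ good ↔ ∀ i, 1 ≤ i → i ≤ n → T i ω = 1 ∨ T i ω = a := by
    intro ω; simp only [hgooddef, Set.mem_setOf_eq]
  have memA1 : ∀ ω, ω ∈ A1 ↔ ∀ i, 1 ≤ i → i ≤ n → T i ω = 1 := by
    intro ω
    simp only [hA1def, Set.mem_iInter, Set.mem_preimage, Set.mem_singleton_iff,
      Finset.mem_Icc, and_imp]
  have memA1' : ∀ ω, ω ∈ A1' ↔ ∀ i, 1 ≤ i → i ≤ n - a → T i ω = 1 := by
    intro ω
    simp only [hA1'def, Set.mem_iInter, Set.mem_preimage, Set.mem_singleton_iff,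
      Finset.mem_Icc, and_imp]
  have memExA : ∀ ω, ω ∈ ExA ↔ ∃ i, 1 ≤ i ∧ i ≤ n - a ∧ T i ω = a := by
    intro ω; simp only [hExAdef, Set.mem_setOf_eq]
  have memD : ∀ b ω, ω ∈ D b ↔
      ((∀ i, 1 ≤ i → i ≤ b - 1 → T i ω = 1 ∨ T i ω = a) ∧
       (∃ i, 1 ≤ i ∧ i ≤ n - a ∧ i ≤ b - 1 ∧ T i ω = a) ∧
       (S14.dw (fun k => T k ω) (b - 1)).length < n ∧
       n ≤ (S14.dw (fun k => T k ω) (b - 1)).length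
          + (S14.dw (fun k => T k ω) (b - 1)).getD (b - 1) 0) := by
    intro b ω; simp only [hDdef, Set.mem_setOf_eq]
  -- key facts about D b
  have hDkey : ∀ b, 2 ≤ b → ∀ ω, ω ∈ D b →
      (S14.dw (fun k => T k ω) (b - 1)).length < n ∧
      n ≤ (S14.dw (fun k => T k ω) b).length ∧
      dirSeq (fun k => T k ω) n = T b ω := by
    intro b hb ω hω
    obtain ⟨hg, ⟨j, hj1, hjna, hjb, hja⟩, hlt, hle⟩ := (memD b ω).mp hω
    have hlenb : (b - 1) + 1 ≤ (S14.dw (fun k => T k ω) (b - 1)).length :=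
      S14.len_ge_succ_of_a (a := a) (fun k => T k ω) (b - 1) hg ha ⟨j, hj1, hjb, hja⟩
    have hstable : dirSeq (fun k => T k ω) b
        = (S14.dw (fun k => T k ω) (b - 1)).getD (b - 1) 0 :=
      S14.dirSeq_stable (fun k => T k ω) b (by omega) (by omega)
    have hblock := S14.dw_len_succ (a := a) (fun k => T k ω) (b - 1) hg
      (Or.inl (by omega)) (by omega)
    rw [show b - 1 + 1 = b by omega] at hblock
    refine ⟨hlt, by omega, ?_⟩
    have := S14.dirSeq_block (a := a) (fun k => T k ω) (b - 1) n hg (Or.inl (by omega))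
      (by omega) hlt (by rw [show b - 1 + 1 = b by omega]; omega)
    rwa [show b - 1 + 1 = b by omega] at this
  have hDdisj : ∀ b b', 2 ≤ b → 2 ≤ b' → b < b' → ∀ ω, ω ∈ D b → ω ∈ D b' → False := by
    intro b b' hb hb' hlt ω h h'
    have k1 := hDkey b hb ω h
    have k2 := hDkey b' hb' ω h'
    have hmono : (S14.dw (fun k => T k ω) b).length
        ≤ (S14.dw (fun k => T k ω) (b' - 1)).length :=
      S14.len_mono _ (by omega)
    omega
  -- coverage
  have hcov : ∀ ω, ω ∈ good → ω ∈ ExA →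
      ∃ b, 2 ≤ b ∧ b ≤ n ∧ ω ∈ D b ∧ dirSeq (fun k => T k ω) n = T b ω := by
    intro ω hgd0 hex0
    have hgd := (memGood ω).mp hgd0
    obtain ⟨iw, hiw1, hiwna, hiwa⟩ := (memExA ω).mp hex0
    have hQex : ∃ i, 1 ≤ i ∧ i ≤ n ∧ T i ω = a := ⟨iw, hiw1, by omega, hiwa⟩
    set j0 := Nat.find hQex with hj0def
    have hj0spec : 1 ≤ j0 ∧ j0 ≤ n ∧ T j0 ω = a := by
      have := Nat.find_spec hQex; rwa [← hj0def] at this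
    obtain ⟨hj01, hj0n, hj0a⟩ := hj0spec
    have hj0min : ∀ i, i < j0 → ¬(1 ≤ i ∧ i ≤ n ∧ T i ω = a) := by
      intro i hi; exact Nat.find_min hQex (by omega)
    have hj0le : j0 ≤ iw := by
      have := Nat.find_min' hQex ⟨hiw1, by omega, hiwa⟩; omega
    have hones : ∀ i, 1 ≤ i → i < j0 → T i ω = 1 := by
      intro i hi1 hi2
      have hin : i ≤ n := by omega
      rcases hgd i hi1 hin with h | h
      · exact h
      · exact absurd ⟨hi1, hin, h⟩ (hj0min i hi2)
    have hfA : S14.dw (fun k => T k ω) j0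
        = List.replicate (j0 - 1) 1 ++ List.replicate a a := by
      have := S14.dw_firstA (a := a) (fun k => T k ω) (j0 - 1)
        (by omega) (fun i hi1 hi2 => hones i hi1 (by omega))
        (by rw [show j0 - 1 + 1 = j0 by omega]; exact hj0a)
      rwa [show j0 - 1 + 1 = j0 by omega] at this
    have hlenj0 : (S14.dw (fun k => T k ω) j0).length = j0 - 1 + a := by
      rw [hfA]; simp
    have hPex : ∃ m, n ≤ (S14.dw (fun k => T k ω) m).length := ⟨n, S14.len_ge _ n⟩
    set b := Nat.find hPex with hbdef
    have hPb : n ≤ (S14.dw (fun k => T k ω) b).length := by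
      have := Nat.find_spec hPex; rwa [← hbdef] at this
    have hbn : b ≤ n := by
      have := Nat.find_min' hPex (S14.len_ge (fun k => T k ω) n); omega
    have hj0b : j0 < b := by
      rcases Nat.lt_or_ge j0 b with h | h
      · exact h
      · exfalso
        have hmono := S14.len_mono (fun k => T k ω) h
        omega
    have hblt : ¬ n ≤ (S14.dw (fun k => T k ω) (b - 1)).length :=
      Nat.find_min hPex (by omega)
    have hgoodpre : ∀ i, 1 ≤ i → i ≤ b - 1 → T i ω = 1 ∨ T i ω = a :=
      fun i hi1 hi2 => hgd i hi1 (by omega)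
    have hlenb1 : b ≤ (S14.dw (fun k => T k ω) (b - 1)).length := by
      have := S14.len_ge_succ_of_a (a := a) (fun k => T k ω) (b - 1) hgoodpre ha
        ⟨j0, hj01, by omega, hj0a⟩
      omega
    have hstable : dirSeq (fun k => T k ω) b
        = (S14.dw (fun k => T k ω) (b - 1)).getD (b - 1) 0 :=
      S14.dirSeq_stable _ b (by omega) hlenb1
    have hblock := S14.dw_len_succ (a := a) (fun k => T k ω) (b - 1) hgoodpre
      (Or.inl (by omega)) (by omega)
    rw [show b - 1 + 1 = b by omega] at hblock
    have hmemD : ω ∈ D b := (memD b ω).mpr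
      ⟨hgoodpre, ⟨j0, hj01, by omega, by omega, hj0a⟩, by omega, by omega⟩
    exact ⟨b, by omega, hbn, hmemD, (hDkey b (by omega) ω hmemD).2.2⟩
  -- classification
  have hmain : ∀ ω, ω ∈ good →
      (dirSeq (fun k => T k ω) n = 1 ↔
        (ω ∈ A1 ∨ ∃ b, 2 ≤ b ∧ b ≤ n ∧ ω ∈ D b ∧ T b ω = 1)) := by
    intro ω hgd0
    have hgd := (memGood ω).mp hgd0
    constructor
    · intro hX
      by_cases hex : ω ∈ ExA
      · obtain ⟨b, hb2, hbn, hDb, hval⟩ := hcov ω hgd0 hex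
        exact Or.inr ⟨b, hb2, hbn, hDb, by rw [← hval]; exact hX⟩
      · have hea : ∀ i, 1 ≤ i → i ≤ n - a → T i ω = 1 := by
          intro i h1i h2i
          rcases hgd i h1i (by omega) with h | h
          · exact h
          · exact absurd ((memExA ω).mpr ⟨i, h1i, h2i, h⟩) hex
        by_cases hall : ∀ i, 1 ≤ i → i ≤ n → T i ω = 1
        · exact Or.inl ((memA1 ω).mpr hall)
        · exfalso
          push_neg at hall
          obtain ⟨i0, hi01, hi0n, hi0ne⟩ := hall
          have hQex : ∃ i, 1 ≤ i ∧ i ≤ n ∧ T i ω = a := by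
            refine ⟨i0, hi01, hi0n, ?_⟩
            rcases hgd i0 hi01 hi0n with h | h
            · exact absurd h hi0ne
            · exact h
          set j := Nat.find hQex with hjdef
          have hjspec : 1 ≤ j ∧ j ≤ n ∧ T j ω = a := by
            have := Nat.find_spec hQex; rwa [← hjdef] at this
          obtain ⟨hj1, hjn, hja⟩ := hjspec
          have hjmin : ∀ i, i < j → ¬(1 ≤ i ∧ i ≤ n ∧ T i ω = a) := by
            intro i hi; exact Nat.find_min hQex (by omega)
          have hones : ∀ i, 1 ≤ i → i < j → T i ω = 1 := by
            intro i h1i h2i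
            rcases hgd i h1i (by omega) with h | h
            · exact h
            · exact absurd ⟨h1i, by omega, h⟩ (hjmin i h2i)
          have hjgt : n - a < j := by
            rcases Nat.lt_or_ge (n - a) j with h | h
            · exact h
            · exfalso; have := hea j hj1 h; omega
          have hfA : S14.dw (fun k => T k ω) j
              = List.replicate (j - 1) 1 ++ List.replicate a a := by
            have := S14.dw_firstA (a := a) (fun k => T k ω) (j - 1)
              (by omega) (fun i h1i h2i => hones i h1i (by omega))
              (by rw [show j - 1 + 1 = j by omega]; exact hja)
            rwa [show j - 1 + 1 = j by omega] at this
          have hlenj : (S14.dw (fun k => T k ω) j).length = j - 1 + a := by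
            rw [hfA]; simp
          have hXa : dirSeq (fun k => T k ω) n = a := by
            rw [S14.dirSeq_eq_dw, S14.getD_stable (fun k => T k ω) hjn (by omega), hfA,
              List.getD_append_right _ _ _ _ (by simp; omega),
              List.getD_eq_getElem _ _ (by simp; omega), List.getElem_replicate]
          omega
    · rintro (h | ⟨b, hb2, hbn, hDb, hTb⟩)
      · have hones := (memA1 ω).mp h
        rw [S14.dirSeq_eq_dw, S14.dw_allones (fun k => T k ω) n hones,
          List.getD_eq_getElem _ _ (by simp; omega), List.getElem_replicate]
      · rw [(hDkey b hb2 ω hDb).2.2]; exact hTb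
  -- measure-theoretic part
  have hTpre : ∀ i c, MeasurableSet (T i ⁻¹' ({c} : Set ℕ)) :=
    fun i c => (hmeas i) (measurableSet_singleton c)
  have hpre1 : ∀ i : ℕ, (T i ⁻¹' ({1} : Set ℕ)) = {ω | T i ω = 1} := fun i => rfl
  have hprea : ∀ i : ℕ, (T i ⁻¹' ({a} : Set ℕ)) = {ω | T i ω = a} := fun i => rfl
  have hgoodc : μ goodᶜ = 0 := by
    have hsub : goodᶜ ⊆ ⋃ i ∈ Finset.Icc 1 n, ((T i ⁻¹' {1}) ∪ (T i ⁻¹' {a}))ᶜ := by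
      intro ω hω
      have hω' : ¬ ∀ i, 1 ≤ i → i ≤ n → T i ω = 1 ∨ T i ω = a := fun h =>
        hω ((memGood ω).mpr h)
      push_neg at hω'
      obtain ⟨i, h1i, hin, hne1, hnea⟩ := hω'
      refine Set.mem_biUnion (Finset.mem_Icc.mpr ⟨h1i, hin⟩) ?_
      simp only [Set.mem_compl_iff, Set.mem_union, Set.mem_preimage, Set.mem_singleton_iff]
      tauto
    refine measure_mono_null hsub ?_
    refine (measure_biUnion_null_iff (Finset.Icc 1 n).countable_toSet).mpr ?_
    intro i hi
    have hi1 : 1 ≤ i := (Finset.mem_Icc.mp hi).1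
    have hdisj : Disjoint (T i ⁻¹' ({1} : Set ℕ)) (T i ⁻¹' ({a} : Set ℕ)) := by
      rw [Set.disjoint_left]
      intro ω hω1 hωa
      simp only [Set.mem_preimage, Set.mem_singleton_iff] at hω1 hωa
      omega
    have hu : μ (T i ⁻¹' ({1} : Set ℕ) ∪ T i ⁻¹' ({a} : Set ℕ)) = 1 := by
      rw [measure_union hdisj (hTpre i a), hpre1 i, hprea i, h1 i hi1, h2 i hi1,
        ← ENNReal.ofReal_add hp0.le (by linarith)]
      norm_num
    rw [measure_compl ((hTpre i 1).union (hTpre i a)) (measure_ne_top μ _), hu, measure_univ,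
      tsub_self]
  -- measure of ExA
  have hExAeq : ExA = ⋃ i ∈ Finset.Icc 1 (n - a), T i ⁻¹' ({a} : Set ℕ) := by
    ext ω
    rw [memExA ω]
    simp only [Set.mem_iUnion, Set.mem_preimage, Set.mem_singleton_iff, Finset.mem_Icc,
      exists_prop]
    constructor
    · rintro ⟨i, h1i, h2i, h3⟩; exact ⟨i, ⟨h1i, h2i⟩, h3⟩
    · rintro ⟨i, ⟨h1i, h2i⟩, h3⟩; exact ⟨i, h1i, h2i, h3⟩
  have hExAm : MeasurableSet ExA := by
    rw [hExAeq]
    exact (Finset.Icc 1 (n - a)).measurableSet_biUnion (fun i _ => hTpre i a)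
  have hA1'μ : μ A1' = ENNReal.ofReal p ^ (n - a) := by
    rw [hA1'def]; exact S14.prod_ones μ T hindep p h1 (n - a)
  have hExAc : μ ExAᶜ = ENNReal.ofReal p ^ (n - a) := by
    have he : ExAᶜ ∩ good = A1' ∩ good := by
      ext ω
      constructor
      · rintro ⟨hc, hg⟩
        refine ⟨(memA1' ω).mpr ?_, hg⟩
        intro i h1i h2i
        rcases (memGood ω).mp hg i h1i (by omega) with h | h
        · exact h
        · exact absurd ((memExA ω).mpr ⟨i, h1i, h2i, h⟩) hc
      · rintro ⟨h1', hg⟩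
        refine ⟨?_, hg⟩
        intro hex
        obtain ⟨i, h1i, h2i, h3⟩ := (memExA ω).mp hex
        have := (memA1' ω).mp h1' i h1i h2i
        omega
    calc μ ExAᶜ = μ (ExAᶜ ∩ good) := (measure_inter_conull hgoodc).symm
      _ = μ (A1' ∩ good) := by rw [he]
      _ = μ A1' := measure_inter_conull hgoodc
      _ = ENNReal.ofReal p ^ (n - a) := hA1'μ
  have hExAμ : μ ExA = 1 - ENNReal.ofReal p ^ (n - a) := by
    have h2' : (1 : ENNReal) - μ ExA = ENNReal.ofReal p ^ (n - a) := by
      rw [← hExAc, measure_compl hExAm (measure_ne_top μ _), measure_univ]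
    rw [← h2', ENNReal.sub_sub_cancel ENNReal.one_ne_top prob_le_one]
  -- D b : dependence, measurability, product rule
  have hDdep : ∀ b, ∀ ω ω', (∀ i ∈ Finset.Icc 1 (b - 1), T i ω = T i ω') →
      ω ∈ D b → ω' ∈ D b := by
    intro b ω ω' hagree hω
    have hag : ∀ i, 1 ≤ i → i ≤ b - 1 → T i ω = T i ω' :=
      fun i hi1 hi2 => hagree i (Finset.mem_Icc.mpr ⟨hi1, hi2⟩)
    have hdw : S14.dw (fun k => T k ω) (b - 1) = S14.dw (fun k => T k ω') (b - 1) :=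
      S14.dw_congr (b - 1) hag
    obtain ⟨hg, ⟨j, hj1, hj2, hj3, hj4⟩, hlt, hle⟩ := (memD b ω).mp hω
    refine (memD b ω').mpr ⟨fun i hi1 hi2 => ?_, ⟨j, hj1, hj2, hj3, ?_⟩, ?_, ?_⟩
    · rw [← hag i hi1 hi2]; exact hg i hi1 hi2
    · rw [← hag j hj1 hj3]; exact hj4
    · rw [← hdw]; exact hlt
    · rw [← hdw]; exact hle
  have hDmeas : ∀ b, MeasurableSet (D b) :=
    fun b => S14.meas_of_dep T hmeas (Finset.Icc 1 (b - 1)) (D b) (hDdep b)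
  have hDmul : ∀ b, 2 ≤ b → μ (D b ∩ T b ⁻¹' ({1} : Set ℕ)) = μ (D b) * ENNReal.ofReal p := by
    intro b hb
    rw [S14.indep_mul μ T hmeas hindep (Finset.Icc 1 (b - 1)) b
      (by simp only [Finset.mem_Icc]; omega) (D b) (hDdep b) 1]
    congr 1
    rw [hpre1 b]
    exact h1 b (by omega)
  -- the union
  set Un : Set Ω := ⋃ b ∈ Finset.Icc 2 n, (D b ∩ T b ⁻¹' ({1} : Set ℕ)) with hUndef
  have hUnmeas : MeasurableSet Un := by
    rw [hUndef]
    exact (Finset.Icc 2 n).measurableSet_biUnion (fun b _ => (hDmeas b).inter (hTpre b 1))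
  have hdisjP : (↑(Finset.Icc 2 n) : Set ℕ).PairwiseDisjoint
      (fun b => D b ∩ T b ⁻¹' ({1} : Set ℕ)) := by
    intro b hb b' hb' hne
    simp only [Finset.coe_Icc, Set.mem_Icc] at hb hb'
    refine Set.disjoint_left.mpr fun ω hω hω' => ?_
    rcases Nat.lt_or_ge b b' with h | h
    · exact hDdisj b b' hb.1 hb'.1 h ω hω.1 hω'.1
    · exact hDdisj b' b hb'.1 hb.1 (by omega) ω hω'.1 hω.1
  have hUnμ : μ Un = (∑ b ∈ Finset.Icc 2 n, μ (D b)) * ENNReal.ofReal p := by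
    rw [hUndef, measure_biUnion_finset hdisjP (fun b _ => (hDmeas b).inter (hTpre b 1)),
      Finset.sum_mul]
    exact Finset.sum_congr rfl fun b hb => hDmul b (Finset.mem_Icc.mp hb).1
  have hdisjPD : (↑(Finset.Icc 2 n) : Set ℕ).PairwiseDisjoint D := by
    intro b hb b' hb' hne
    simp only [Finset.coe_Icc, Set.mem_Icc] at hb hb'
    refine Set.disjoint_left.mpr fun ω hω hω' => ?_
    rcases Nat.lt_or_ge b b' with h | h
    · exact hDdisj b b' hb.1 hb'.1 h ω hω hω'
    · exact hDdisj b' b hb'.1 hb.1 (by omega) ω hω' hω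
  have hsumD : (∑ b ∈ Finset.Icc 2 n, μ (D b)) = μ ExA := by
    rw [← measure_biUnion_finset hdisjPD (fun b _ => hDmeas b)]
    calc μ (⋃ b ∈ Finset.Icc 2 n, D b)
        = μ ((⋃ b ∈ Finset.Icc 2 n, D b) ∩ good) := (measure_inter_conull hgoodc).symm
      _ = μ (ExA ∩ good) := by
          congr 1
          ext ω
          constructor
          · rintro ⟨hU, hg⟩
            refine ⟨?_, hg⟩
            simp only [Set.mem_iUnion, exists_prop] at hU
            obtain ⟨b, hbmem, hDb⟩ := hU
            obtain ⟨_, ⟨j, hj1, hj2, _, hj4⟩, _, _⟩ := (memD b ω).mp hDb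
            exact (memExA ω).mpr ⟨j, hj1, hj2, hj4⟩
          · rintro ⟨hex, hg⟩
            obtain ⟨b, hb2, hbn, hDb, _⟩ := hcov ω hg hex
            exact ⟨Set.mem_biUnion (Finset.mem_Icc.mpr ⟨hb2, hbn⟩) hDb, hg⟩
      _ = μ ExA := measure_inter_conull hgoodc
  have hdisjA1 : Disjoint A1 Un := by
    refine Set.disjoint_left.mpr fun ω hA hU => ?_
    rw [hUndef] at hU
    simp only [Set.mem_iUnion, exists_prop, Set.mem_inter_iff] at hU
    obtain ⟨b, hbmem, hDb, _⟩ := hU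
    obtain ⟨_, ⟨j, hj1, hj2, _, hj4⟩, _, _⟩ := (memD b ω).mp hDb
    have := (memA1 ω).mp hA j hj1 (by omega)
    omega
  have hset : {ω | dirSeq (fun k => T k ω) n = 1} ∩ good = (A1 ∪ Un) ∩ good := by
    ext ω
    simp only [Set.mem_inter_iff, Set.mem_setOf_eq, Set.mem_union]
    constructor
    · rintro ⟨hX, hg⟩
      refine ⟨?_, hg⟩
      rcases (hmain ω hg).mp hX with h | ⟨b, hb2, hbn, hDb, hTb⟩
      · exact Or.inl h
      · refine Or.inr ?_
        rw [hUndef]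
        exact Set.mem_biUnion (Finset.mem_Icc.mpr ⟨hb2, hbn⟩) ⟨hDb, hTb⟩
    · rintro ⟨h, hg⟩
      refine ⟨(hmain ω hg).mpr ?_, hg⟩
      rcases h with h | h
      · exact Or.inl h
      · rw [hUndef] at h
        simp only [Set.mem_iUnion, exists_prop, Set.mem_inter_iff] at h
        obtain ⟨b, hbmem, hDb, hTb⟩ := h
        exact Or.inr ⟨b, (Finset.mem_Icc.mp hbmem).1, (Finset.mem_Icc.mp hbmem).2, hDb, hTb⟩
  have hA1μ : μ A1 = ENNReal.ofReal p ^ n := by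
    rw [hA1def]; exact S14.prod_ones μ T hindep p h1 n
  calc μ {ω | dirSeq (fun k => T k ω) n = 1}
      = μ ({ω | dirSeq (fun k => T k ω) n = 1} ∩ good) := (measure_inter_conull hgoodc).symm
    _ = μ ((A1 ∪ Un) ∩ good) := by rw [hset]
    _ = μ (A1 ∪ Un) := measure_inter_conull hgoodc
    _ = μ A1 + μ Un := measure_union hdisjA1 hUnmeas
    _ = ENNReal.ofReal p ^ n + (1 - ENNReal.ofReal p ^ (n - a)) * ENNReal.ofReal p := by
        rw [hA1μ, hUnμ, hsumD, hExAμ]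
    _ = ENNReal.ofReal (p * (1 - p ^ (n - a) + p ^ (n - 1))) := by
        have hple : p ^ (n - a) ≤ 1 := pow_le_one₀ hp0.le hp1.le
        rw [← ENNReal.ofReal_pow hp0.le, ← ENNReal.ofReal_pow hp0.le,
          show (1 : ENNReal) = ENNReal.ofReal 1 from ENNReal.ofReal_one.symm,
          ← ENNReal.ofReal_sub 1 (pow_nonneg hp0.le _),
          ← ENNReal.ofReal_mul (by linarith),
          ← ENNReal.ofReal_add (pow_nonneg hp0.le n)
            (mul_nonneg (by linarith) hp0.le)]
        congr 1
        have hpn : p ^ n = p ^ (n - 1) * p := by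
          rw [← pow_succ]; congr 1; omega
        rw [hpn]; ring
end
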